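/- arXiv:2409.04814 — 2 statements merged into one kernel-verified Lean document; each statement's English description precedes it below -/
import Mathlib

section
/- Tail estimate: let ω ∈ Ω. There exist C > 0 and X₀ > 0 such that for every Y ≥ 1 and every X > max(X₀, Y^{1/2}), (1/X)·∫_X^{2X} |∑_{Y < m ≤ X²} (r₂(m)/m)·sin(π·√m·ω(x))·sin(π·√m·(2x+ω(x)))|² dx ≤ C·Y^{−1/4}·(log X)². -/
open MeasureTheory Filter Real

noncomputable section

/-- The Cygan–Korányi norm on `ℝ³`. -/
def cyganNorm (u : ℝ × ℝ × ℝ) : ℝ :=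
  ((u.1 ^ 2 + u.2.1 ^ 2) ^ 2 + u.2.2 ^ 2) ^ ((1 : ℝ) / 4)

/-- The unit ball for the Cygan–Korányi norm. -/
def cyganBall : Set (ℝ × ℝ × ℝ) := {u | cyganNorm u ≤ 1}

/-- The Heisenberg dilation `δ_x`. -/
def heisDil (x : ℝ) (u : ℝ × ℝ × ℝ) : ℝ × ℝ × ℝ := (x * u.1, x * u.2.1, x ^ 2 * u.2.2)

/-- Euclidean volume of the Cygan–Korányi unit ball. -/
def volB : ℝ := (volume cyganBall).toReal

/-- `N(x)`: the number of integer lattice points inside `δ_x B`. -/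
def latticeCount (x : ℝ) : ℕ :=
  Set.ncard {p : ℤ × ℤ × ℤ | ((p.1 : ℝ), (p.2.1 : ℝ), (p.2.2 : ℝ)) ∈ heisDil x '' cyganBall}

/-- The error term `E(x;ω)` for the shell count. -/
def Eshell (ω : ℝ → ℝ) (x : ℝ) : ℝ :=
  ((latticeCount (x + ω x) : ℝ) - (latticeCount x : ℝ))
    - volB * ∑ j ∈ Finset.Icc 1 4, (Nat.choose 4 j : ℝ) * x ^ (4 - j) * ω x ^ j

/-- The normalized error term `Ê(x;ω) = E(x;ω)/x²`. -/
def Ehat (ω : ℝ → ℝ) (x : ℝ) : ℝ := Eshell ω x / x ^ 2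

/-- `σ(X;ω)`, the square root of the variance of `Ê(x;ω)` over `[X,2X]`. -/
def sigmaShell (ω : ℝ → ℝ) (X : ℝ) : ℝ :=
  Real.sqrt ((1 / X) * ∫ x in X..(2 * X), Ehat ω x ^ 2)

/-- `M_j(X;ω) = (1/X)·∫_X^{2X} (ω(x)·log ω(x))^j dx`. -/
def Mom (j : ℕ) (X : ℝ) (ω : ℝ → ℝ) : ℝ :=
  (1 / X) * ∫ x in X..(2 * X), (ω x * Real.log (ω x)) ^ j

/-- `L_j(ω) = lim_{X→∞} M_j(X;ω)/M_2(X;ω)^{j/2}`. -/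
def Llim (ω : ℝ → ℝ) (j : ℕ) : ℝ :=
  limUnder atTop fun X => Mom j X ω / Mom 2 X ω ^ (j / 2)

/-- The Gaussian moment factor `j!/(2^{j/2}·(j/2)!)`. -/
def gaussMoment (j : ℕ) : ℝ :=
  (Nat.factorial j : ℝ) / (2 ^ (j / 2) * (Nat.factorial (j / 2) : ℝ))

/-- The regularity class `Ω` of gap width functions. -/
structure OmegaClass (ω : ℝ → ℝ) : Prop where
  contDiff : ContDiffOn ℝ 2 ω (Set.Ioi 0)
  pos : ∀ x, 0 < x → 0 < ω x
  tendsto_zero : Tendsto ω atTop (nhds 0)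
  deriv_small : ∀ᶠ x in atTop, |deriv ω x| < 1 / 2
  zeros_bound : ∃ C > (0 : ℝ), ∃ ξ > (0 : ℝ), ∀ᶠ X in atTop,
    {x ∈ Set.Icc X (2 * X) | deriv ω x = 0}.Finite ∧
    {x ∈ Set.Icc X (2 * X) | deriv (deriv ω) x = 0}.Finite ∧
    ({x ∈ Set.Icc X (2 * X) | deriv ω x = 0}.ncard : ℝ) *
        sSup (ω '' Set.Icc X (2 * X)) ≤ C * X ^ ((1 : ℝ) / 2) ∧
    ({x ∈ Set.Icc X (2 * X) | deriv (deriv ω) x = 0}.ncard : ℝ) ≤ C * X ^ (1 - ξ)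
  mom2_lower : ∀ α > (0 : ℝ), ∃ c > (0 : ℝ), ∀ᶠ X in atTop, c * X ^ (-α) ≤ Mom 2 X ω
  Llim_exists : ∀ j : ℕ, Even j →
    Tendsto (fun X => Mom j X ω / Mom 2 X ω ^ (j / 2)) atTop (nhds (Llim ω j))
  carleman : Tendsto (fun n => ∑ k ∈ Finset.range n,
      (gaussMoment (2 * (k + 1)) * Llim ω (2 * (k + 1))) ^
        ((-1 : ℝ) / (2 * ((k : ℝ) + 1)))) atTop atTop

/-- `r₂(m)`: the number of representations of `m` as a sum of two integer squares. -/
def r2 (m : ℕ) : ℕ := Set.ncard {p : ℤ × ℤ | p.1 ^ 2 + p.2 ^ 2 = (m : ℤ)}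

/-- The sawtooth function `ψ(t) = t − ⌊t⌋ − 1/2`. -/
def sawtooth (t : ℝ) : ℝ := t - ⌊t⌋ - 1 / 2

/-- The sawtooth sum `Ξ_ψ(x;ω)`. -/
def XiPsi (ω : ℝ → ℝ) (x : ℝ) : ℝ :=
  (∑ m ∈ Finset.Icc 1 ⌊(x + ω x) ^ 2⌋₊,
      (r2 m : ℝ) * sawtooth (Real.sqrt ((x + ω x) ^ 4 - (m : ℝ) ^ 2)))
    - ∑ m ∈ Finset.Icc 1 ⌊x ^ 2⌋₊, (r2 m : ℝ) * sawtooth (Real.sqrt (x ^ 4 - (m : ℝ) ^ 2))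


lemma aux_sin_mul_sin (c x w : ℝ) :
    Real.sin (c * w) * Real.sin (c * (2 * x + w))
      = (Real.cos (2 * (c * x)) - Real.cos (2 * (c * (x + w)))) / 2 := by
  have h1 : 2 * (c * x) = c * (2 * x + w) - c * w := by ring
  have h2 : 2 * (c * (x + w)) = c * (2 * x + w) + c * w := by ring
  rw [h1, h2, Real.cos_sub, Real.cos_add]; ring

lemma aux_integral_cos (γ a b : ℝ) (hγ : γ ≠ 0) :
    |∫ u in a..b, Real.cos (γ * u)| ≤ 2 / |γ| := by
  have h : ∀ u ∈ Set.uIcc a b,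
      HasDerivAt (fun v => Real.sin (γ * v) / γ) (Real.cos (γ * u)) u := by
    intro u _
    have h1 : HasDerivAt (fun v : ℝ => γ * v) γ u := by
      simpa using (hasDerivAt_id u).const_mul γ
    have h2 := (Real.hasDerivAt_sin (γ * u)).comp u h1
    have h3 := h2.div_const γ
    simpa [mul_div_assoc, mul_div_cancel_right₀ _ hγ] using h3
  have hint : ∫ u in a..b, Real.cos (γ * u)
      = Real.sin (γ * b) / γ - Real.sin (γ * a) / γ := by
    apply intervalIntegral.integral_eq_sub_of_hasDerivAt h
    exact (Real.continuous_cos.comp (continuous_const.mul continuous_id)).intervalIntegrable a b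
  rw [hint]
  have hb : |Real.sin (γ * b) / γ| ≤ 1 / |γ| := by
    rw [abs_div]
    gcongr
    exact Real.abs_sin_le_one _
  have ha : |Real.sin (γ * a) / γ| ≤ 1 / |γ| := by
    rw [abs_div]
    gcongr
    exact Real.abs_sin_le_one _
  calc |Real.sin (γ * b) / γ - Real.sin (γ * a) / γ|
      ≤ |Real.sin (γ * b) / γ| + |Real.sin (γ * a) / γ| := abs_sub _ _
    _ ≤ 1 / |γ| + 1 / |γ| := add_le_add hb ha
    _ = 2 / |γ| := by ring

lemma aux_integral_coscos (a b α β : ℝ) (hα : 0 ≤ α) (hβ : 0 ≤ β) (hne : α ≠ β) :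
    |∫ u in a..b, Real.cos (α * u) * Real.cos (β * u)| ≤ 2 / |α - β| := by
  have habs : (0:ℝ) < |α - β| := abs_pos.mpr (sub_ne_zero.mpr hne)
  have hsum : |α - β| ≤ α + β :=
    abs_le.mpr ⟨by linarith, by linarith⟩
  have hps : (0:ℝ) < α + β := lt_of_lt_of_le habs hsum
  have hrw : ∀ u : ℝ, Real.cos (α * u) * Real.cos (β * u)
      = Real.cos ((α - β) * u) / 2 + Real.cos ((α + β) * u) / 2 := by
    intro u
    have h1 : (α - β) * u = α * u - β * u := by ring
    have h2 : (α + β) * u = α * u + β * u := by ring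
    rw [h1, h2, Real.cos_sub, Real.cos_add]; ring
  have hi1 : IntervalIntegrable (fun u => Real.cos ((α - β) * u) / 2) volume a b :=
    ((Real.continuous_cos.comp (continuous_const.mul continuous_id)).div_const 2).intervalIntegrable a b
  have hi2 : IntervalIntegrable (fun u => Real.cos ((α + β) * u) / 2) volume a b :=
    ((Real.continuous_cos.comp (continuous_const.mul continuous_id)).div_const 2).intervalIntegrable a b
  rw [intervalIntegral.integral_congr (g := fun u => Real.cos ((α - β) * u) / 2
        + Real.cos ((α + β) * u) / 2) (fun u _ => hrw u),
    intervalIntegral.integral_add hi1 hi2]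
  have e1 : ∫ u in a..b, Real.cos ((α - β) * u) / 2
      = (∫ u in a..b, Real.cos ((α - β) * u)) / 2 := intervalIntegral.integral_div 2 _
  have e2 : ∫ u in a..b, Real.cos ((α + β) * u) / 2
      = (∫ u in a..b, Real.cos ((α + β) * u)) / 2 := intervalIntegral.integral_div 2 _
  rw [e1, e2]
  have b1 := aux_integral_cos (α - β) a b (sub_ne_zero.mpr hne)
  have b2 := aux_integral_cos (α + β) a b (ne_of_gt hps)
  have h2' : 2 / |α + β| ≤ 2 / |α - β| := by
    rw [abs_of_pos hps]
    apply div_le_div_of_nonneg_left (by norm_num) habs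
    exact hsum
  calc |(∫ u in a..b, Real.cos ((α-β)*u)) / 2 + (∫ u in a..b, Real.cos ((α+β)*u)) / 2|
      ≤ |(∫ u in a..b, Real.cos ((α-β)*u)) / 2| + |(∫ u in a..b, Real.cos ((α+β)*u)) / 2| :=
        abs_add_le _ _
    _ = |∫ u in a..b, Real.cos ((α-β)*u)| / 2 + |∫ u in a..b, Real.cos ((α+β)*u)| / 2 := by
        rw [abs_div, abs_div]; norm_num
    _ ≤ (2 / |α - β|) / 2 + (2 / |α + β|) / 2 := by gcongr
    _ ≤ (2 / |α - β|) / 2 + (2 / |α - β|) / 2 := by gcongr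
    _ = 2 / |α - β| := by ring

lemma aux_sqrt_diff_mul (m n : ℕ) :
    (Real.sqrt m - Real.sqrt n) * (Real.sqrt m + Real.sqrt n) = (m:ℝ) - n := by
  have hsm : Real.sqrt m * Real.sqrt m = (m:ℝ) := Real.mul_self_sqrt (by positivity)
  have hsn : Real.sqrt n * Real.sqrt n = (n:ℝ) := Real.mul_self_sqrt (by positivity)
  linear_combination hsm - hsn

lemma aux_coscos_pair (m n : ℕ) (hmn : m ≠ n) (a b : ℝ) :
    |∫ u in a..b, Real.cos (2 * (π * Real.sqrt m) * u) * Real.cos (2 * (π * Real.sqrt n) * u)|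
      ≤ (Real.sqrt m + Real.sqrt n) / (π * |(m:ℝ) - n|) := by
  have hsm : Real.sqrt m * Real.sqrt m = (m:ℝ) := Real.mul_self_sqrt (by positivity)
  have hsn : Real.sqrt n * Real.sqrt n = (n:ℝ) := Real.mul_self_sqrt (by positivity)
  have hsne : Real.sqrt m ≠ Real.sqrt n := by
    intro h
    exact hmn (Nat.cast_injective (by rw [← hsm, ← hsn, h]))
  have hpi := Real.pi_pos
  have hαβ : 2 * (π * Real.sqrt m) ≠ 2 * (π * Real.sqrt n) := by
    intro h
    apply hsne
    have h2 : π * Real.sqrt m = π * Real.sqrt n := by linarith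
    exact mul_left_cancel₀ (ne_of_gt hpi) h2
  have h1 := aux_integral_coscos a b (2 * (π * Real.sqrt m)) (2 * (π * Real.sqrt n))
    (by positivity) (by positivity) hαβ
  have hspos : (0:ℝ) < Real.sqrt m + Real.sqrt n := by
    have : Real.sqrt m - Real.sqrt n ≠ 0 := sub_ne_zero.mpr hsne
    rcases (Real.sqrt_nonneg (m:ℝ)).lt_or_eq with h | h
    · positivity
    · rcases (Real.sqrt_nonneg (n:ℝ)).lt_or_eq with h' | h'
      · positivity
      · exact absurd (by rw [← h, ← h']) hsne
  have habs : (0:ℝ) < |Real.sqrt m - Real.sqrt n| := abs_pos.mpr (sub_ne_zero.mpr hsne)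
  have hmn' : |Real.sqrt m - Real.sqrt n| * (Real.sqrt m + Real.sqrt n) = |(m:ℝ) - n| := by
    rw [← abs_of_pos hspos, ← abs_mul, aux_sqrt_diff_mul]
  have hrw : 2 * (π * Real.sqrt m) - 2 * (π * Real.sqrt n)
      = (2 * π) * (Real.sqrt m - Real.sqrt n) := by ring
  rw [hrw, abs_mul, abs_of_pos (by positivity : (0:ℝ) < 2 * π)] at h1
  refine h1.trans (le_of_eq ?_)
  rw [← hmn']
  field_simp


def aux_box (s : ℕ) : Finset (ℤ × ℤ) :=
  Finset.Icc (-(s:ℤ)) (s:ℤ) ×ˢ Finset.Icc (-(s:ℤ)) (s:ℤ)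

lemma aux_box_card (s : ℕ) : (aux_box s).card = (2*s+1) * (2*s+1) := by
  rw [aux_box, Finset.card_product, Int.card_Icc]
  have : ((s:ℤ) + 1 - -(s:ℤ)).toNat = 2*s+1 := by omega
  rw [this]

lemma aux_mem_box {m s : ℕ} (hs : Nat.sqrt m ≤ s) {p : ℤ × ℤ}
    (hp : p.1 ^ 2 + p.2 ^ 2 = (m : ℤ)) : p ∈ aux_box s := by
  have h1 : p.1.natAbs * p.1.natAbs ≤ m := by
    have := sq_nonneg p.2
    have h : (↑(p.1.natAbs * p.1.natAbs) : ℤ) ≤ (m:ℤ) := by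
      rw [Int.natAbs_mul_self]; nlinarith [sq_nonneg p.2]
    exact_mod_cast h
  have h2 : p.2.natAbs * p.2.natAbs ≤ m := by
    have h : (↑(p.2.natAbs * p.2.natAbs) : ℤ) ≤ (m:ℤ) := by
      rw [Int.natAbs_mul_self]; nlinarith [sq_nonneg p.1]
    exact_mod_cast h
  have b1 : p.1.natAbs ≤ s := le_trans (Nat.le_sqrt.mpr h1) hs
  have b2 : p.2.natAbs ≤ s := le_trans (Nat.le_sqrt.mpr h2) hs
  simp only [aux_box, Finset.mem_product, Finset.mem_Icc]
  omega

lemma aux_r2_eq_card (m s : ℕ) (hs : Nat.sqrt m ≤ s) :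
    r2 m = ((aux_box s).filter (fun p => p.1^2 + p.2^2 = (m:ℤ))).card := by
  rw [r2, ← Set.ncard_coe_finset]
  congr 1
  ext p
  simp only [Set.mem_setOf_eq, Finset.coe_filter, Finset.mem_coe]
  constructor
  · intro h; exact ⟨aux_mem_box hs h, h⟩
  · exact fun h => h.2

lemma aux_r2_le (m : ℕ) : (r2 m) ≤ 2 * (2 * Nat.sqrt m + 1) := by
  set s := Nat.sqrt m
  rw [aux_r2_eq_card m s le_rfl]
  have : (((aux_box s).filter (fun p => p.1^2 + p.2^2 = (m:ℤ)))).card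
      ≤ ((Finset.Icc (-(s:ℤ)) (s:ℤ)) ×ˢ (Finset.univ : Finset Bool)).card := by
    apply Finset.card_le_card_of_injOn (fun p => (p.1, decide (0 ≤ p.2)))
    · intro p hp
      simp only [Finset.mem_filter, aux_box, Finset.mem_product, Finset.mem_Icc] at hp ⊢
      exact Finset.mem_product.mpr ⟨(Finset.mem_product.mp (Finset.mem_filter.mp hp).1).1, Finset.mem_univ _⟩
    · intro p hp q hq h
      simp only [Finset.coe_filter, Set.mem_setOf_eq, Finset.mem_filter] at hp hq
      simp only [Prod.mk.injEq] at h
      have h1 : p.1 = q.1 := h.1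
      have h2' : (0 ≤ p.2) ↔ (0 ≤ q.2) := by
        have := h.2; simp only [decide_eq_decide] at this; exact this
      have hsq : p.2 ^ 2 = q.2 ^ 2 := by
        have hp2 := hp.2
        rw [h1] at hp2
        linarith [hq.2]
      have : (p.2 - q.2) * (p.2 + q.2) = 0 := by ring_nf; nlinarith [hsq]
      rcases mul_eq_zero.mp this with h3 | h3
      · exact Prod.ext h1 (by omega)
      · exact Prod.ext h1 (by omega)
  rw [Finset.card_product, Int.card_Icc] at this
  simp only [Finset.card_univ, Fintype.card_bool] at this
  omega

lemma aux_r2_le_real {m : ℕ} (hm : 1 ≤ m) : (r2 m : ℝ) ≤ 9 * Real.sqrt m := by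
  have h := aux_r2_le m
  have hs : (Nat.sqrt m : ℝ) ≤ Real.sqrt m := by
    rw [show ((Nat.sqrt m : ℝ)) = Real.sqrt ((Nat.sqrt m : ℝ)^2) by
      rw [Real.sqrt_sq (by positivity)]]
    apply Real.sqrt_le_sqrt
    exact_mod_cast Nat.sqrt_le' m
  have h1 : (1:ℝ) ≤ Real.sqrt m := by
    rw [show (1:ℝ) = Real.sqrt 1 by simp]
    exact Real.sqrt_le_sqrt (by exact_mod_cast hm)
  have : (r2 m : ℝ) ≤ 2 * (2 * (Nat.sqrt m : ℝ) + 1) := by exact_mod_cast h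
  nlinarith

lemma aux_r2_sum_le (N : ℕ) (hN : 1 ≤ N) : ∑ m ∈ Finset.Icc 1 N, r2 m ≤ 9 * N := by
  set s := Nat.sqrt N
  set s' : Finset (ℤ × ℤ) :=
    (aux_box s).filter (fun p => (p.1^2 + p.2^2).toNat ∈ Finset.Icc 1 N) with hs'
  have key : s'.card = ∑ m ∈ Finset.Icc 1 N,
      (s'.filter (fun p => (p.1^2 + p.2^2).toNat = m)).card :=
    Finset.card_eq_sum_card_fiberwise (fun p hp => (Finset.mem_filter.mp hp).2)
  have heq : ∀ m ∈ Finset.Icc 1 N,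
      (s'.filter (fun p => (p.1^2 + p.2^2).toNat = m)).card = r2 m := by
    intro m hm
    simp only [Finset.mem_Icc] at hm
    rw [aux_r2_eq_card m s (Nat.sqrt_le_sqrt hm.2)]
    congr 1
    ext p
    simp only [hs', Finset.mem_filter, Finset.mem_Icc]
    constructor
    · rintro ⟨⟨hbox, _⟩, htn⟩
      refine ⟨hbox, ?_⟩
      have hnn : (0:ℤ) ≤ p.1^2 + p.2^2 := by positivity
      omega
    · rintro ⟨hbox, hpm⟩
      have hnn : (0:ℤ) ≤ p.1^2 + p.2^2 := by positivity
      refine ⟨⟨hbox, ?_⟩, ?_⟩ <;> omega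
  have hsum : ∑ m ∈ Finset.Icc 1 N, r2 m = s'.card := by
    rw [key]
    exact (Finset.sum_congr rfl heq).symm
  have hcard : s'.card ≤ (2*s+1)*(2*s+1) := by
    rw [← aux_box_card s]
    exact Finset.card_filter_le _ _
  have hss : s * s ≤ N := by have h := Nat.sqrt_le' N; rwa [pow_two] at h
  rw [hsum]
  rcases Nat.eq_zero_or_pos s with h0 | h1
  · rw [h0] at hcard; omega
  · have : s ≤ s * s := Nat.le_mul_of_pos_left s h1
    calc s'.card ≤ (2*s+1)*(2*s+1) := hcard
      _ = 4*(s*s) + 4*s + 1 := by ring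
      _ ≤ 9 * N := by omega

lemma aux_r2_sum_Ioc (A N : ℕ) : ∑ m ∈ Finset.Ioc A N, (r2 m : ℝ) ≤ 9 * N := by
  rcases Nat.eq_zero_or_pos N with h0 | h1
  · subst h0; simp
  · calc ∑ m ∈ Finset.Ioc A N, (r2 m : ℝ)
        ≤ ∑ m ∈ Finset.Icc 1 N, (r2 m : ℝ) := by
          apply Finset.sum_le_sum_of_subset_of_nonneg
          · intro m hm
            simp only [Finset.mem_Ioc, Finset.mem_Icc] at hm ⊢
            omega
          · intro i _ _; positivity
      _ ≤ 9 * N := by exact_mod_cast aux_r2_sum_le N h1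

lemma aux_block_bound (A N : ℕ) (hA : 1 ≤ A) (hN : N ≤ 2*A) :
    ∑ m ∈ Finset.Ioc A N, (r2 m : ℝ) / ((m:ℝ) * Real.sqrt m) ≤ 18 / Real.sqrt A := by
  have hApos : (0:ℝ) < A := by exact_mod_cast hA
  have hsA : (0:ℝ) < Real.sqrt A := Real.sqrt_pos.mpr hApos
  calc ∑ m ∈ Finset.Ioc A N, (r2 m : ℝ) / ((m:ℝ) * Real.sqrt m)
      ≤ ∑ m ∈ Finset.Ioc A N, (r2 m : ℝ) * (1 / ((A:ℝ) * Real.sqrt A)) := by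
        apply Finset.sum_le_sum
        intro m hm
        simp only [Finset.mem_Ioc] at hm
        have hmA : (A:ℝ) ≤ m := by exact_mod_cast le_of_lt hm.1
        have hsm : Real.sqrt A ≤ Real.sqrt m := Real.sqrt_le_sqrt hmA
        have hpos : (0:ℝ) < (A:ℝ) * Real.sqrt A := by positivity
        rw [mul_one_div]
        apply div_le_div_of_nonneg_left (by positivity) hpos
        exact mul_le_mul hmA hsm (le_of_lt hsA) (by positivity)
    _ = (∑ m ∈ Finset.Ioc A N, (r2 m : ℝ)) * (1 / ((A:ℝ) * Real.sqrt A)) := by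
        rw [Finset.sum_mul]
    _ ≤ (9 * N) * (1 / ((A:ℝ) * Real.sqrt A)) := by
        apply mul_le_mul_of_nonneg_right (aux_r2_sum_Ioc A N) (by positivity)
    _ ≤ (9 * (2*A)) * (1 / ((A:ℝ) * Real.sqrt A)) := by
        have : (N:ℝ) ≤ 2*A := by exact_mod_cast hN
        gcongr
    _ = 18 / Real.sqrt A := by field_simp; ring

lemma aux_diag_sum (k : ℕ) : ∀ A N : ℕ, 1 ≤ A → N ≤ A + k →
    ∑ m ∈ Finset.Ioc A N, (r2 m : ℝ) / ((m:ℝ) * Real.sqrt m) ≤ 63 / Real.sqrt A := by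
  induction k with
  | zero =>
    intro A N hA hN
    rw [Finset.Ioc_eq_empty (by omega)]
    simp only [Finset.sum_empty]
    positivity
  | succ k ih =>
    intro A N hA hN
    have hApos : (0:ℝ) < A := by exact_mod_cast hA
    have hsA : (0:ℝ) < Real.sqrt A := Real.sqrt_pos.mpr hApos
    by_cases hcase : N ≤ 2*A
    · exact le_trans (aux_block_bound A N hA hcase) (by gcongr <;> norm_num)
    · push_neg at hcase
      have hsplit : ∑ m ∈ Finset.Ioc A (2*A), (r2 m : ℝ) / ((m:ℝ) * Real.sqrt m)
          + ∑ m ∈ Finset.Ioc (2*A) N, (r2 m : ℝ) / ((m:ℝ) * Real.sqrt m)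
          = ∑ m ∈ Finset.Ioc A N, (r2 m : ℝ) / ((m:ℝ) * Real.sqrt m) :=
        Finset.sum_Ioc_consecutive _ (by omega) (by omega)
      rw [← hsplit]
      have h1 := aux_block_bound A (2*A) hA le_rfl
      have h2 := ih (2*A) N (by omega) (by omega)
      have hs2 : Real.sqrt (2*(A:ℝ)) = Real.sqrt 2 * Real.sqrt A := Real.sqrt_mul (by norm_num) _
      have hcast : ((2*A : ℕ):ℝ) = 2*(A:ℝ) := by push_cast; ring
      rw [hcast, hs2] at h2
      have hsqrt2 : (1.414:ℝ) ≤ Real.sqrt 2 := by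
        rw [show (1.414:ℝ) = Real.sqrt (1.999396) by
          rw [show (1.999396:ℝ) = 1.414^2 by norm_num, Real.sqrt_sq (by norm_num)]]
        exact Real.sqrt_le_sqrt (by norm_num)
      have h3 : 63 / (Real.sqrt 2 * Real.sqrt A) ≤ 44.6 / Real.sqrt A := by
        rw [div_le_div_iff₀ (by positivity) hsA]
        have : (63:ℝ) ≤ 44.6 * 1.414 := by norm_num
        nlinarith [hsA, hsqrt2]
      calc _ ≤ 18 / Real.sqrt A + 44.6 / Real.sqrt A := add_le_add h1 (h2.trans h3)
        _ ≤ 63 / Real.sqrt A := by rw [← add_div]; gcongr <;> norm_num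

lemma aux_offdiag_avg (k : ℕ) : ∀ A N : ℕ, 1 ≤ A → A ≤ N → N ≤ A + k →
    ∑ m ∈ Finset.Ioc A N, (r2 m : ℝ) / m ≤ 27 * (1 + Real.log N - Real.log A) := by
  induction k with
  | zero =>
    intro A N hA hAN hN
    have : N = A := by omega
    subst this
    rw [Finset.Ioc_eq_empty (by omega)]
    simp
  | succ k ih =>
    intro A N hA hAN hN
    have hApos : (0:ℝ) < A := by exact_mod_cast hA
    have hNpos : (0:ℝ) < N := by
      have : 1 ≤ N := le_trans hA hAN
      exact_mod_cast this
    have hlogmono : Real.log A ≤ Real.log N :=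
      Real.log_le_log hApos (by exact_mod_cast hAN)
    by_cases hcase : N ≤ 2*A
    · have hblock : ∑ m ∈ Finset.Ioc A N, (r2 m : ℝ) / m ≤ 18 := by
        calc ∑ m ∈ Finset.Ioc A N, (r2 m : ℝ) / m
            ≤ ∑ m ∈ Finset.Ioc A N, (r2 m : ℝ) * (1/(A:ℝ)) := by
              apply Finset.sum_le_sum
              intro m hm
              simp only [Finset.mem_Ioc] at hm
              have hmA : (A:ℝ) ≤ m := by exact_mod_cast le_of_lt hm.1
              rw [mul_one_div]
              exact div_le_div_of_nonneg_left (by positivity) hApos hmA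
          _ = (∑ m ∈ Finset.Ioc A N, (r2 m : ℝ)) * (1/(A:ℝ)) := by rw [Finset.sum_mul]
          _ ≤ (9 * N) * (1/(A:ℝ)) := by
              apply mul_le_mul_of_nonneg_right (aux_r2_sum_Ioc A N) (by positivity)
          _ ≤ (9 * (2*(A:ℝ))) * (1/(A:ℝ)) := by
              have : (N:ℝ) ≤ 2*A := by exact_mod_cast hcase
              gcongr
          _ = 18 := by field_simp; ring
      linarith
    · push_neg at hcase
      have hsplit : ∑ m ∈ Finset.Ioc A (2*A), (r2 m : ℝ) / m
          + ∑ m ∈ Finset.Ioc (2*A) N, (r2 m : ℝ) / m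
          = ∑ m ∈ Finset.Ioc A N, (r2 m : ℝ) / m :=
        Finset.sum_Ioc_consecutive _ (by omega) (by omega)
      rw [← hsplit]
      have h1 : ∑ m ∈ Finset.Ioc A (2*A), (r2 m : ℝ) / m ≤ 18 := by
        calc ∑ m ∈ Finset.Ioc A (2*A), (r2 m : ℝ) / m
            ≤ ∑ m ∈ Finset.Ioc A (2*A), (r2 m : ℝ) * (1/(A:ℝ)) := by
              apply Finset.sum_le_sum
              intro m hm
              simp only [Finset.mem_Ioc] at hm
              have hmA : (A:ℝ) ≤ m := by exact_mod_cast le_of_lt hm.1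
              rw [mul_one_div]
              exact div_le_div_of_nonneg_left (by positivity) hApos hmA
          _ = (∑ m ∈ Finset.Ioc A (2*A), (r2 m : ℝ)) * (1/(A:ℝ)) := by rw [Finset.sum_mul]
          _ ≤ (9 * ((2*A:ℕ):ℝ)) * (1/(A:ℝ)) := by
              apply mul_le_mul_of_nonneg_right (aux_r2_sum_Ioc A (2*A)) (by positivity)
          _ = 18 := by push_cast; field_simp; ring
      have h2 := ih (2*A) N (by omega) (by omega) (by omega)
      have hcast : Real.log ((2*A:ℕ):ℝ) = Real.log 2 + Real.log A := by
        push_cast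
        rw [Real.log_mul (by norm_num) (ne_of_gt hApos)]
      rw [hcast] at h2
      have hlog2 : (0.6931:ℝ) ≤ Real.log 2 := le_of_lt (by
        have := Real.log_two_gt_d9; linarith)
      linarith

lemma aux_r2_div_sum (T : ℕ) (hT : 1 ≤ T) :
    ∑ m ∈ Finset.Icc 1 T, (r2 m : ℝ) / m ≤ 36 * (1 + Real.log T) := by
  rw [Finset.Icc_eq_cons_Ioc hT, Finset.sum_cons]
  have h0 : (r2 1 : ℝ) ≤ 9 := by
    simpa using aux_r2_le_real (le_refl 1)
  have h1 := aux_offdiag_avg T 1 T le_rfl hT (by omega)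
  simp only [Nat.cast_one, Real.log_one] at h1
  have hlogT : 0 ≤ Real.log T := Real.log_nonneg (by exact_mod_cast hT)
  push_cast
  rw [div_one]
  linarith

lemma aux_harmonic (J : ℕ) : ∑ j ∈ Finset.Icc 1 J, (1:ℝ)/j ≤ 1 + Real.log J := by
  induction J with
  | zero => simp
  | succ J ih =>
    rw [Finset.sum_Icc_succ_top (by omega)]
    rcases Nat.eq_zero_or_pos J with hJ | hJ
    · subst hJ; norm_num
    · have hJpos : (0:ℝ) < J := by exact_mod_cast hJ
      have hJ1pos : (0:ℝ) < (J:ℝ) + 1 := by linarith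
      have hlog : (1:ℝ)/((J:ℝ)+1) ≤ Real.log ((J:ℝ)+1) - Real.log J := by
        have h := Real.log_le_sub_one_of_pos (show (0:ℝ) < (J:ℝ)/((J:ℝ)+1) by positivity)
        rw [Real.log_div (ne_of_gt hJpos) (ne_of_gt hJ1pos)] at h
        have : (J:ℝ)/((J:ℝ)+1) - 1 = -(1/((J:ℝ)+1)) := by field_simp; ring
        rw [this] at h
        linarith
      push_cast
      push_cast at ih
      linarith

lemma aux_invsqrt_sum (N : ℕ) :
    ∑ n ∈ Finset.Icc 1 N, 1/Real.sqrt n ≤ 2 * Real.sqrt N := by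
  induction N with
  | zero => simp
  | succ N ih =>
    rw [Finset.sum_Icc_succ_top (by omega)]
    have h1 : Real.sqrt ((N:ℝ)+1) ^ 2 = (N:ℝ)+1 := Real.sq_sqrt (by positivity)
    have h2 : Real.sqrt (N:ℝ) ^ 2 = (N:ℝ) := Real.sq_sqrt (by positivity)
    have h3 : Real.sqrt (N:ℝ) ≤ Real.sqrt ((N:ℝ)+1) := Real.sqrt_le_sqrt (by linarith)
    have h4 : (0:ℝ) < Real.sqrt ((N:ℝ)+1) := Real.sqrt_pos.mpr (by positivity)
    have key : 1/Real.sqrt ((N:ℝ)+1) ≤ 2 * Real.sqrt ((N:ℝ)+1) - 2 * Real.sqrt N := by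
      rw [div_le_iff₀ h4]
      nlinarith [sq_nonneg (Real.sqrt ((N:ℝ)+1) - Real.sqrt N)]
    push_cast
    push_cast at ih
    linarith

lemma aux_natlog_mono {a b : ℕ} (hab : a ≤ b) : Real.log a ≤ Real.log b := by
  rcases Nat.eq_zero_or_pos a with h0 | h1
  · subst h0
    simp only [Nat.cast_zero, Real.log_zero]
    exact Real.log_natCast_nonneg b
  · exact Real.log_le_log (by exact_mod_cast h1) (by exact_mod_cast hab)

lemma aux_sum_inv_dist_lt (m : ℕ) (hm : 1 ≤ m) :
    ∑ n ∈ Finset.Ico 1 m, (1:ℝ)/((m:ℝ) - n) ≤ 1 + Real.log m := by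
  have hre : ∑ n ∈ Finset.Ico 1 m, (1:ℝ)/((m:ℝ) - n)
      = ∑ j ∈ Finset.Icc 1 (m-1), (1:ℝ)/j := by
    apply Finset.sum_nbij' (fun n => m - n) (fun j => m - j)
    · intro a ha; simp only [Finset.mem_Ico, Finset.mem_Icc] at ha ⊢; omega
    · intro a ha; simp only [Finset.mem_Ico, Finset.mem_Icc] at ha ⊢; omega
    · intro a ha; simp only [Finset.mem_Ico] at ha; omega
    · intro a ha; simp only [Finset.mem_Icc] at ha; omega
    · intro a ha
      simp only [Finset.mem_Ico] at ha
      congr 1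
      have : ((m - a : ℕ) : ℝ) = (m:ℝ) - a := by
        push_cast [Nat.cast_sub (le_of_lt ha.2)]; ring
      rw [this]
  rw [hre]
  exact (aux_harmonic (m-1)).trans (by
    have := aux_natlog_mono (show m - 1 ≤ m by omega)
    linarith)

lemma aux_sum_inv_dist_gt (m T : ℕ) :
    ∑ n ∈ Finset.Ioc m T, (1:ℝ)/((n:ℝ) - m) ≤ 1 + Real.log T := by
  have hre : ∑ n ∈ Finset.Ioc m T, (1:ℝ)/((n:ℝ) - m)
      = ∑ j ∈ Finset.Icc 1 (T-m), (1:ℝ)/j := by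
    apply Finset.sum_nbij' (fun n => n - m) (fun j => j + m)
    · intro a ha; simp only [Finset.mem_Ioc, Finset.mem_Icc] at ha ⊢; omega
    · intro a ha; simp only [Finset.mem_Ioc, Finset.mem_Icc] at ha ⊢; omega
    · intro a ha; simp only [Finset.mem_Ioc] at ha; omega
    · intro a ha; simp only [Finset.mem_Icc] at ha; omega
    · intro a ha
      simp only [Finset.mem_Ioc] at ha
      congr 1
      have : ((a - m : ℕ) : ℝ) = (a:ℝ) - m := by
        push_cast [Nat.cast_sub (le_of_lt ha.1)]; ring
      rw [this]
  rw [hre]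
  exact (aux_harmonic (T-m)).trans (by
    have := aux_natlog_mono (show T - m ≤ T by omega)
    linarith)

lemma aux_inner_term_lt (m n : ℕ) (hn : 1 ≤ n) (hnm : n < m) :
    (1/Real.sqrt n) * ((Real.sqrt m + Real.sqrt n)/|(m:ℝ) - n|)
      ≤ (4/Real.sqrt m) * (1/Real.sqrt n) + 3 * (1/((m:ℝ) - n)) := by
  have hd : (0:ℝ) < (m:ℝ) - n := by
    have : (n:ℝ) < m := by exact_mod_cast hnm
    linarith
  rw [abs_of_pos hd]
  have hnpos : (0:ℝ) < n := by exact_mod_cast hn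
  have hmpos : (0:ℝ) < m := by exact_mod_cast (by omega : 0 < m)
  have hsn : (0:ℝ) < Real.sqrt n := Real.sqrt_pos.mpr hnpos
  have hsm : (0:ℝ) < Real.sqrt m := Real.sqrt_pos.mpr hmpos
  have hsm2 : Real.sqrt m * Real.sqrt m = (m:ℝ) := Real.mul_self_sqrt (le_of_lt hmpos)
  have hsn2 : Real.sqrt n * Real.sqrt n = (n:ℝ) := Real.mul_self_sqrt (le_of_lt hnpos)
  have hsnm : Real.sqrt n ≤ Real.sqrt m := Real.sqrt_le_sqrt (by exact_mod_cast le_of_lt hnm)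
  by_cases hc : (n:ℝ) * 2 ≤ m
  · -- n ≤ m/2 : use first term
    have h1 : (1/Real.sqrt n) * ((Real.sqrt m + Real.sqrt n)/((m:ℝ) - n))
        ≤ (4/Real.sqrt m) * (1/Real.sqrt n) := by
      rw [one_div_mul_eq_div, div_div, div_mul_div_comm, mul_one,
        div_le_div_iff₀ (by positivity) (by positivity)]
      have k1 : (Real.sqrt m + Real.sqrt n) * (Real.sqrt m * Real.sqrt n)
          ≤ (2 * Real.sqrt m) * (Real.sqrt m * Real.sqrt n) :=
        mul_le_mul_of_nonneg_right (by linarith) (by positivity)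
      have k2 : (2 * Real.sqrt m) * (Real.sqrt m * Real.sqrt n) = 2 * (m:ℝ) * Real.sqrt n := by
        rw [show (2 * Real.sqrt m) * (Real.sqrt m * Real.sqrt n)
          = 2 * (Real.sqrt m * Real.sqrt m) * Real.sqrt n by ring, hsm2]
      have k3 : 2 * (m:ℝ) * Real.sqrt n ≤ 4 * (((m:ℝ) - n) * Real.sqrt n) := by
        nlinarith [mul_nonneg (by linarith : (0:ℝ) ≤ (m:ℝ) - (n:ℝ)*2) hsn.le]
      linarith
    have h2 : (0:ℝ) ≤ 3 * (1/((m:ℝ) - n)) := by positivity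
    linarith
  · -- n > m/2 : use second term
    push_neg at hc
    have h1 : (1/Real.sqrt n) * ((Real.sqrt m + Real.sqrt n)/((m:ℝ) - n))
        ≤ 3 * (1/((m:ℝ) - n)) := by
      rw [one_div_mul_eq_div, div_div, mul_one_div, div_le_div_iff₀ (by positivity) hd]
      have h4n : Real.sqrt ((4:ℝ)*n) = 2 * Real.sqrt n := by
        rw [show (4:ℝ)*n = (2:ℝ)^2 * n by ring, Real.sqrt_mul (by positivity) _,
          Real.sqrt_sq (by norm_num)]
      have hkey : Real.sqrt m ≤ 2 * Real.sqrt n :=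
        (Real.sqrt_le_sqrt (by linarith : (m:ℝ) ≤ 4*n)).trans_eq h4n
      have k := mul_le_mul_of_nonneg_right
        (show Real.sqrt m + Real.sqrt n ≤ 3 * Real.sqrt n by linarith) hd.le
      nlinarith [k]
    have h2 : (0:ℝ) ≤ (4/Real.sqrt m) * (1/Real.sqrt n) := by positivity
    linarith

lemma aux_inner_term_gt (m n : ℕ) (hm : 1 ≤ m) (hmn : m < n) :
    (1/Real.sqrt n) * ((Real.sqrt m + Real.sqrt n)/|(m:ℝ) - n|)
      ≤ 2 * (1/((n:ℝ) - m)) := by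
  have hd : (0:ℝ) < (n:ℝ) - m := by
    have : (m:ℝ) < n := by exact_mod_cast hmn
    linarith
  have habs : |(m:ℝ) - n| = (n:ℝ) - m := by
    rw [abs_of_neg (by linarith)]; ring
  rw [habs]
  have hmpos : (0:ℝ) < m := by exact_mod_cast hm
  have hnpos : (0:ℝ) < n := by exact_mod_cast (by omega : 0 < n)
  have hsn : (0:ℝ) < Real.sqrt n := Real.sqrt_pos.mpr hnpos
  have hsmn : Real.sqrt m ≤ Real.sqrt n := Real.sqrt_le_sqrt (by exact_mod_cast le_of_lt hmn)
  rw [one_div_mul_eq_div, div_div, mul_one_div, div_le_div_iff₀ (by positivity) hd]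
  have k := mul_le_mul_of_nonneg_right
    (show Real.sqrt m + Real.sqrt n ≤ 2 * Real.sqrt n by linarith) hd.le
  nlinarith [k]

lemma aux_inner_sum (T m : ℕ) (hm1 : 1 ≤ m) (hmT : m ≤ T) :
    ∑ n ∈ (Finset.Icc 1 T).erase m,
        (1/Real.sqrt n) * ((Real.sqrt m + Real.sqrt n)/|(m:ℝ) - n|)
      ≤ 13 * (1 + Real.log T) := by
  have hT1 : 1 ≤ T := le_trans hm1 hmT
  have hlogT : 0 ≤ Real.log T := Real.log_nonneg (by exact_mod_cast hT1)
  have hlogm : Real.log m ≤ Real.log T := aux_natlog_mono hmT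
  have hsplit : (Finset.Icc 1 T).erase m = Finset.Ico 1 m ∪ Finset.Ioc m T := by
    ext n
    simp only [Finset.mem_erase, Finset.mem_Icc, Finset.mem_union, Finset.mem_Ico,
      Finset.mem_Ioc]
    omega
  have hdisj : Disjoint (Finset.Ico 1 m) (Finset.Ioc m T) := by
    rw [Finset.disjoint_left]
    intro n h1 h2
    simp only [Finset.mem_Ico] at h1
    simp only [Finset.mem_Ioc] at h2
    omega
  rw [hsplit, Finset.sum_union hdisj]
  have hsm : (0:ℝ) < Real.sqrt m := Real.sqrt_pos.mpr (by exact_mod_cast hm1)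
  -- part 1 : n < m
  have hpart1 : ∑ n ∈ Finset.Ico 1 m,
      (1/Real.sqrt n) * ((Real.sqrt m + Real.sqrt n)/|(m:ℝ) - n|)
      ≤ 8 + 3 * (1 + Real.log m) := by
    calc ∑ n ∈ Finset.Ico 1 m, (1/Real.sqrt n) * ((Real.sqrt m + Real.sqrt n)/|(m:ℝ) - n|)
        ≤ ∑ n ∈ Finset.Ico 1 m, ((4/Real.sqrt m) * (1/Real.sqrt n) + 3 * (1/((m:ℝ) - n))) := by
          apply Finset.sum_le_sum
          intro n hn
          simp only [Finset.mem_Ico] at hn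
          exact aux_inner_term_lt m n hn.1 hn.2
      _ = (4/Real.sqrt m) * (∑ n ∈ Finset.Ico 1 m, 1/Real.sqrt n)
          + 3 * (∑ n ∈ Finset.Ico 1 m, 1/((m:ℝ) - n)) := by
          rw [Finset.sum_add_distrib, Finset.mul_sum, Finset.mul_sum]
      _ ≤ (4/Real.sqrt m) * (2 * Real.sqrt m) + 3 * (1 + Real.log m) := by
          have hs1 : ∑ n ∈ Finset.Ico 1 m, 1/Real.sqrt (n:ℝ) ≤ 2 * Real.sqrt m := by
            refine le_trans ?_ (aux_invsqrt_sum m)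
            apply Finset.sum_le_sum_of_subset_of_nonneg
            · intro n hn
              simp only [Finset.mem_Ico, Finset.mem_Icc] at hn ⊢
              omega
            · intro n _ _; positivity
          have hs2 := aux_sum_inv_dist_lt m hm1
          gcongr
      _ = 8 + 3 * (1 + Real.log m) := by field_simp; ring
  -- part 2 : n > m
  have hpart2 : ∑ n ∈ Finset.Ioc m T,
      (1/Real.sqrt n) * ((Real.sqrt m + Real.sqrt n)/|(m:ℝ) - n|)
      ≤ 2 * (1 + Real.log T) := by
    calc ∑ n ∈ Finset.Ioc m T, (1/Real.sqrt n) * ((Real.sqrt m + Real.sqrt n)/|(m:ℝ) - n|)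
        ≤ ∑ n ∈ Finset.Ioc m T, 2 * (1/((n:ℝ) - m)) := by
          apply Finset.sum_le_sum
          intro n hn
          simp only [Finset.mem_Ioc] at hn
          exact aux_inner_term_gt m n hm1 hn.1
      _ = 2 * ∑ n ∈ Finset.Ioc m T, 1/((n:ℝ) - m) := by rw [Finset.mul_sum]
      _ ≤ 2 * (1 + Real.log T) := by
          have := aux_sum_inv_dist_gt m T
          gcongr
  calc _ ≤ (8 + 3 * (1 + Real.log m)) + 2 * (1 + Real.log T) := add_le_add hpart1 hpart2
    _ ≤ 13 * (1 + Real.log T) := by nlinarith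

lemma aux_cmsq (m : ℕ) (hm : 1 ≤ m) :
    ((r2 m : ℝ)/m)^2 ≤ 9 * ((r2 m : ℝ)/((m:ℝ) * Real.sqrt m)) := by
  have hmpos : (0:ℝ) < m := by exact_mod_cast hm
  have hsm : (0:ℝ) < Real.sqrt m := Real.sqrt_pos.mpr hmpos
  have hsm2 : Real.sqrt m * Real.sqrt m = (m:ℝ) := Real.mul_self_sqrt hmpos.le
  have hr2 : (0:ℝ) ≤ (r2 m : ℝ) := by positivity
  have hb := aux_r2_le_real hm
  rw [div_pow, mul_div_assoc', div_le_div_iff₀ (by positivity) (by positivity)]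
  have k : (r2 m:ℝ)^2 * Real.sqrt m ≤ (r2 m:ℝ) * (9 * Real.sqrt m) * Real.sqrt m := by
    apply mul_le_mul_of_nonneg_right _ hsm.le
    nlinarith [hb, hr2]
  calc (r2 m:ℝ)^2 * ((m:ℝ) * Real.sqrt m) = ((r2 m:ℝ)^2 * Real.sqrt m) * m := by ring
    _ ≤ ((r2 m:ℝ) * (9 * Real.sqrt m) * Real.sqrt m) * m := by
        apply mul_le_mul_of_nonneg_right k hmpos.le
    _ = 9 * (r2 m:ℝ) * ((Real.sqrt m * Real.sqrt m) * m) := by ring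
    _ = 9 * (r2 m:ℝ) * (m:ℝ)^2 := by rw [hsm2]; ring

set_option maxHeartbeats 1000000 in
lemma aux_main_integral_bound (A Tn : ℕ) (hA : 1 ≤ A) (hTn : 1 ≤ Tn) (X : ℝ) (hX : 0 < X) :
    ∫ u in X..(3*X),
        (∑ m ∈ Finset.Ioc A Tn, (r2 m : ℝ)/m * Real.cos (2*(π*Real.sqrt m)*u))^2
      ≤ (2*X) * (9 * (63 / Real.sqrt A))
        + 117 * (1 + Real.log Tn) * (36 * (1 + Real.log Tn)) := by
  set I := Finset.Ioc A Tn with hI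
  have hmem : ∀ m ∈ I, 1 ≤ m ∧ m ≤ Tn := by
    intro m hm
    rw [hI, Finset.mem_Ioc] at hm
    omega
  have hcont : ∀ k : ℕ, Continuous (fun u => Real.cos (2*(π*Real.sqrt k)*u)) := by
    intro k
    exact Real.continuous_cos.comp (continuous_const.mul continuous_id)
  have hci : ∀ (m n : ℕ), IntervalIntegrable
      (fun u => ((r2 m : ℝ)/m * Real.cos (2*(π*Real.sqrt m)*u))
        * ((r2 n : ℝ)/n * Real.cos (2*(π*Real.sqrt n)*u))) volume X (3*X) := by
    intro m n
    exact (((continuous_const.mul (hcont m))).mul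
      ((continuous_const.mul (hcont n)))).intervalIntegrable _ _
  have hTsq : ∀ u : ℝ, (∑ m ∈ I, (r2 m : ℝ)/m * Real.cos (2*(π*Real.sqrt m)*u))^2
      = ∑ m ∈ I, ∑ n ∈ I, ((r2 m : ℝ)/m * Real.cos (2*(π*Real.sqrt m)*u))
          * ((r2 n : ℝ)/n * Real.cos (2*(π*Real.sqrt n)*u)) := fun u => by
    rw [pow_two, Finset.sum_mul_sum]
  -- expand the square
  have hexp : ∫ u in X..(3*X),
      (∑ m ∈ I, (r2 m : ℝ)/m * Real.cos (2*(π*Real.sqrt m)*u))^2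
      = ∑ m ∈ I, ∑ n ∈ I, ((r2 m : ℝ)/m * (r2 n : ℝ)/n)
          * ∫ u in X..(3*X),
              Real.cos (2*(π*Real.sqrt m)*u) * Real.cos (2*(π*Real.sqrt n)*u) := by
    calc ∫ u in X..(3*X), (∑ m ∈ I, (r2 m : ℝ)/m * Real.cos (2*(π*Real.sqrt m)*u))^2
        = ∫ u in X..(3*X), ∑ m ∈ I, ∑ n ∈ I,
            ((r2 m : ℝ)/m * Real.cos (2*(π*Real.sqrt m)*u))
              * ((r2 n : ℝ)/n * Real.cos (2*(π*Real.sqrt n)*u)) :=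
          intervalIntegral.integral_congr (fun u _ => hTsq u)
      _ = ∑ m ∈ I, ∫ u in X..(3*X), ∑ n ∈ I,
            ((r2 m : ℝ)/m * Real.cos (2*(π*Real.sqrt m)*u))
              * ((r2 n : ℝ)/n * Real.cos (2*(π*Real.sqrt n)*u)) :=
          intervalIntegral.integral_finset_sum
            (f := fun (m : ℕ) (u : ℝ) => ∑ n ∈ I,
              ((r2 m : ℝ)/m * Real.cos (2*(π*Real.sqrt m)*u))
                * ((r2 n : ℝ)/n * Real.cos (2*(π*Real.sqrt n)*u)))
            (fun m _ => (continuous_finset_sum I (fun n _ =>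
              (continuous_const.mul (hcont m)).mul
                (continuous_const.mul (hcont n)))).intervalIntegrable _ _)
      _ = ∑ m ∈ I, ∑ n ∈ I, ∫ u in X..(3*X),
            ((r2 m : ℝ)/m * Real.cos (2*(π*Real.sqrt m)*u))
              * ((r2 n : ℝ)/n * Real.cos (2*(π*Real.sqrt n)*u)) :=
          Finset.sum_congr rfl (fun m _ =>
            intervalIntegral.integral_finset_sum
              (f := fun (n : ℕ) (u : ℝ) =>
                ((r2 m : ℝ)/m * Real.cos (2*(π*Real.sqrt m)*u))
                  * ((r2 n : ℝ)/n * Real.cos (2*(π*Real.sqrt n)*u)))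
              (fun n _ => hci m n))
      _ = ∑ m ∈ I, ∑ n ∈ I, ((r2 m : ℝ)/m * (r2 n : ℝ)/n)
            * ∫ u in X..(3*X),
                Real.cos (2*(π*Real.sqrt m)*u) * Real.cos (2*(π*Real.sqrt n)*u) := by
          apply Finset.sum_congr rfl
          intro m _
          apply Finset.sum_congr rfl
          intro n _
          rw [intervalIntegral.integral_congr
            (g := fun u => ((r2 m : ℝ)/m * (r2 n : ℝ)/n)
              * (Real.cos (2*(π*Real.sqrt m)*u) * Real.cos (2*(π*Real.sqrt n)*u)))
            (fun u _ => by ring), intervalIntegral.integral_const_mul]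
  rw [hexp]
  -- bound each pair
  have hpair : ∀ m ∈ I, ∑ n ∈ I, ((r2 m : ℝ)/m * (r2 n : ℝ)/n)
        * ∫ u in X..(3*X),
            Real.cos (2*(π*Real.sqrt m)*u) * Real.cos (2*(π*Real.sqrt n)*u)
      ≤ ((r2 m : ℝ)/m)^2 * (2*X)
        + (r2 m : ℝ)/m * (9 * (13 * (1 + Real.log Tn))) := by
    intro m hm
    obtain ⟨hm1, hmT⟩ := hmem m hm
    have hcm : (0:ℝ) ≤ (r2 m : ℝ)/m := by positivity
    rw [← Finset.add_sum_erase I _ hm]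
    apply add_le_add
    · -- diagonal
      have hint : ∫ u in X..(3*X),
          Real.cos (2*(π*Real.sqrt m)*u) * Real.cos (2*(π*Real.sqrt m)*u) ≤ 2*X := by
        calc ∫ u in X..(3*X), Real.cos (2*(π*Real.sqrt m)*u) * Real.cos (2*(π*Real.sqrt m)*u)
            ≤ ∫ _u in X..(3*X), (1:ℝ) := by
              apply intervalIntegral.integral_mono_on (by linarith)
                ((((hcont m)).mul ((hcont m))).intervalIntegrable _ _)
                (intervalIntegrable_const)
              intro u _; simp only [Pi.mul_apply]
              nlinarith [Real.neg_one_le_cos (2*(π*Real.sqrt m)*u),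
                Real.cos_le_one (2*(π*Real.sqrt m)*u)]
          _ = 2*X := by simp; ring
      calc ((r2 m : ℝ)/m * (r2 m : ℝ)/m)
            * ∫ u in X..(3*X), Real.cos (2*(π*Real.sqrt m)*u) * Real.cos (2*(π*Real.sqrt m)*u)
          ≤ ((r2 m : ℝ)/m * (r2 m : ℝ)/m) * (2*X) := by
            apply mul_le_mul_of_nonneg_left hint (by positivity)
        _ = ((r2 m : ℝ)/m)^2 * (2*X) := by ring
    · -- off-diagonal
      calc ∑ n ∈ I.erase m, ((r2 m : ℝ)/m * (r2 n : ℝ)/n)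
            * ∫ u in X..(3*X),
                Real.cos (2*(π*Real.sqrt m)*u) * Real.cos (2*(π*Real.sqrt n)*u)
          ≤ ∑ n ∈ I.erase m, (r2 m : ℝ)/m
              * (9 * ((1/Real.sqrt n) * ((Real.sqrt m + Real.sqrt n)/|(m:ℝ) - n|))) := by
            apply Finset.sum_le_sum
            intro n hn
            have hnm : n ≠ m := (Finset.mem_erase.mp hn).1
            have hnI := (Finset.mem_erase.mp hn).2
            obtain ⟨hn1, hnT⟩ := hmem n hnI
            have hnpos : (0:ℝ) < n := by exact_mod_cast hn1
            have hsn : (0:ℝ) < Real.sqrt n := Real.sqrt_pos.mpr hnpos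
            have habs : (0:ℝ) < |(m:ℝ) - n| := by
              rw [abs_pos, sub_ne_zero]
              intro h
              exact hnm (Nat.cast_injective h).symm
            have hcn : (r2 n : ℝ)/n ≤ 9 * (1/Real.sqrt n) := by
              rw [mul_one_div, div_le_div_iff₀ hnpos hsn]
              have := aux_r2_le_real hn1
              nlinarith [Real.mul_self_sqrt hnpos.le, hsn]
            have hone : (Real.sqrt m + Real.sqrt n)/(π * |(m:ℝ) - n|)
                ≤ (Real.sqrt m + Real.sqrt n)/|(m:ℝ) - n| := by
              apply div_le_div_of_nonneg_left (by positivity) habs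
              nlinarith [Real.pi_gt_three, habs]
            have hint := aux_coscos_pair m n (fun h : m = n => hnm h.symm) X (3*X)
            calc ((r2 m : ℝ)/m * (r2 n : ℝ)/n)
                  * ∫ u in X..(3*X),
                      Real.cos (2*(π*Real.sqrt m)*u) * Real.cos (2*(π*Real.sqrt n)*u)
                ≤ ((r2 m : ℝ)/m * (r2 n : ℝ)/n)
                    * ((Real.sqrt m + Real.sqrt n) / (π * |(m:ℝ) - n|)) := by
                  apply mul_le_mul_of_nonneg_left
                    ((le_abs_self _).trans hint) (by positivity)
              _ = (r2 m : ℝ)/m * ((r2 n : ℝ)/n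
                    * ((Real.sqrt m + Real.sqrt n) / (π * |(m:ℝ) - n|))) := by ring
              _ ≤ (r2 m : ℝ)/m
                    * (9 * ((1/Real.sqrt n) * ((Real.sqrt m + Real.sqrt n)/|(m:ℝ) - n|))) := by
                  apply mul_le_mul_of_nonneg_left _ hcm
                  calc (r2 n : ℝ)/n * ((Real.sqrt m + Real.sqrt n) / (π * |(m:ℝ) - n|))
                      ≤ (9 * (1/Real.sqrt n)) * ((Real.sqrt m + Real.sqrt n)/|(m:ℝ) - n|) := by
                        apply mul_le_mul hcn hone (by positivity) (by positivity)
                    _ = 9 * ((1/Real.sqrt n) * ((Real.sqrt m + Real.sqrt n)/|(m:ℝ) - n|)) := by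
                        ring
        _ = (r2 m : ℝ)/m * 9 * (∑ n ∈ I.erase m,
              (1/Real.sqrt n) * ((Real.sqrt m + Real.sqrt n)/|(m:ℝ) - n|)) := by
            rw [Finset.mul_sum]
            apply Finset.sum_congr rfl
            intro n _
            ring
        _ ≤ (r2 m : ℝ)/m * 9 * (13 * (1 + Real.log Tn)) := by
            apply mul_le_mul_of_nonneg_left _ (by positivity)
            refine le_trans ?_ (aux_inner_sum Tn m hm1 hmT)
            apply Finset.sum_le_sum_of_subset_of_nonneg
            · intro n hn
              have h1 := (Finset.mem_erase.mp hn).1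
              have h2 := hmem n (Finset.mem_erase.mp hn).2
              rw [Finset.mem_erase, Finset.mem_Icc]
              exact ⟨h1, h2.1, h2.2⟩
            · intro n _ _
              positivity
        _ = (r2 m : ℝ)/m * (9 * (13 * (1 + Real.log Tn))) := by ring
  calc ∑ m ∈ I, ∑ n ∈ I, ((r2 m : ℝ)/m * (r2 n : ℝ)/n)
        * ∫ u in X..(3*X), Real.cos (2*(π*Real.sqrt m)*u) * Real.cos (2*(π*Real.sqrt n)*u)
      ≤ ∑ m ∈ I, (((r2 m : ℝ)/m)^2 * (2*X)
          + (r2 m : ℝ)/m * (9 * (13 * (1 + Real.log Tn)))) :=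
        Finset.sum_le_sum hpair
    _ = (∑ m ∈ I, ((r2 m : ℝ)/m)^2) * (2*X)
        + (∑ m ∈ I, (r2 m : ℝ)/m) * (9 * (13 * (1 + Real.log Tn))) := by
        rw [Finset.sum_add_distrib, Finset.sum_mul, Finset.sum_mul]
    _ ≤ (9 * (63 / Real.sqrt A)) * (2*X)
        + (36 * (1 + Real.log Tn)) * (9 * (13 * (1 + Real.log Tn))) := by
        apply add_le_add
        · apply mul_le_mul_of_nonneg_right _ (by linarith)
          calc ∑ m ∈ I, ((r2 m : ℝ)/m)^2
              ≤ ∑ m ∈ I, 9 * ((r2 m : ℝ)/((m:ℝ) * Real.sqrt m)) := by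
                apply Finset.sum_le_sum
                intro m hm
                exact aux_cmsq m (hmem m hm).1
            _ = 9 * ∑ m ∈ I, (r2 m : ℝ)/((m:ℝ) * Real.sqrt m) := by rw [Finset.mul_sum]
            _ ≤ 9 * (63 / Real.sqrt A) := by
                have := aux_diag_sum Tn A Tn hA (by omega)
                gcongr
        · apply mul_le_mul _ le_rfl (by positivity) (by positivity)
          calc ∑ m ∈ I, (r2 m : ℝ)/m
              ≤ ∑ m ∈ Finset.Icc 1 Tn, (r2 m : ℝ)/m := by
                apply Finset.sum_le_sum_of_subset_of_nonneg
                · intro m hm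
                  obtain ⟨h1, h2⟩ := hmem m hm
                  rw [Finset.mem_Icc]
                  exact ⟨h1, h2⟩
                · intro m _ _; positivity
            _ ≤ 36 * (1 + Real.log Tn) := aux_r2_div_sum Tn hTn
    _ = (2*X) * (9 * (63 / Real.sqrt A))
        + 117 * (1 + Real.log Tn) * (36 * (1 + Real.log Tn)) := by ring

lemma aux_term_eq (m : ℕ) (x w : ℝ) :
    Real.sin (Real.pi * Real.sqrt m * w) * Real.sin (Real.pi * Real.sqrt m * (2 * x + w))
      = (Real.cos (2*(π*Real.sqrt m)*x) - Real.cos (2*(π*Real.sqrt m)*(x+w)))/2 := by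
  have h := aux_sin_mul_sin (π*Real.sqrt m) x w
  rw [mul_assoc 2 (π*Real.sqrt m) x, mul_assoc 2 (π*Real.sqrt m) (x+w)]
  exact h

set_option maxHeartbeats 1000000 in
/-- Tail estimate for the Voronoï-type series. -/
theorem tail_estimate (ω : ℝ → ℝ) (hω : OmegaClass ω) :
    ∃ C > (0 : ℝ), ∃ X₀ > (0 : ℝ), ∀ Y : ℝ, 1 ≤ Y → ∀ X : ℝ, max X₀ (Real.sqrt Y) < X →
      (1 / X) * ∫ x in X..(2 * X),
          (∑ m ∈ Finset.Ioc ⌊Y⌋₊ ⌊X ^ 2⌋₊,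
            (r2 m : ℝ) / m * Real.sin (Real.pi * Real.sqrt m * ω x) *
              Real.sin (Real.pi * Real.sqrt m * (2 * x + ω x))) ^ 2
        ≤ C * Y ^ ((-1 : ℝ) / 4) * Real.log X ^ 2 := by
  have hev : ∀ᶠ x in atTop, |deriv ω x| < 1/2 ∧ ω x ≤ 1 :=
    hω.deriv_small.and (hω.tendsto_zero.eventually (eventually_le_nhds one_pos))
  obtain ⟨a, ha⟩ := Filter.eventually_atTop.mp hev
  refine ⟨60000, by norm_num, max a 3,
    lt_of_lt_of_le (by norm_num) (le_max_right a 3), ?_⟩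
  intro Y hY X hXmax
  obtain ⟨hX1, hX2⟩ := max_lt_iff.mp hXmax
  have hX3 : (3:ℝ) ≤ X := le_of_lt (lt_of_le_of_lt (le_max_right a 3) hX1)
  have hXa : a ≤ X := le_of_lt (lt_of_le_of_lt (le_max_left a 3) hX1)
  have hX0 : (0:ℝ) < X := by linarith
  have hY0 : (0:ℝ) < Y := by linarith
  have hprop : ∀ x : ℝ, X ≤ x → |deriv ω x| < 1/2 ∧ ω x ≤ 1 :=
    fun x hx => ha x (le_trans hXa hx)
  set A := ⌊Y⌋₊ with hA
  set Tn := ⌊X^2⌋₊ with hTn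
  have hA1 : 1 ≤ A := Nat.le_floor (by exact_mod_cast hY)
  have hTn1 : 1 ≤ Tn := Nat.le_floor (by push_cast; nlinarith)
  have hAcast : (1:ℝ) ≤ (A:ℝ) := by exact_mod_cast hA1
  have hAY : Y ≤ 2 * (A:ℝ) := by
    have := Nat.lt_floor_add_one Y
    linarith
  have hTnX : (Tn:ℝ) ≤ X^2 := Nat.floor_le (by positivity)
  have hTnpos : (0:ℝ) < (Tn:ℝ) := by exact_mod_cast hTn1
  set T : ℝ → ℝ := fun u => ∑ m ∈ Finset.Ioc A Tn,
    (r2 m : ℝ)/m * Real.cos (2*(π*Real.sqrt m)*u) with hTdef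
  have hpt : ∀ x : ℝ, (∑ m ∈ Finset.Ioc A Tn,
      (r2 m : ℝ) / m * Real.sin (Real.pi * Real.sqrt m * ω x) *
        Real.sin (Real.pi * Real.sqrt m * (2 * x + ω x)))
      = (T x - T (x + ω x))/2 := by
    intro x
    simp only [hTdef]
    rw [← Finset.sum_sub_distrib, Finset.sum_div]
    apply Finset.sum_congr rfl
    intro m _
    rw [mul_assoc, aux_term_eq m x (ω x)]
    ring
  have hTcont : Continuous T := by
    rw [hTdef]
    apply continuous_finset_sum
    intro m _
    exact continuous_const.mul
      (Real.continuous_cos.comp (continuous_const.mul continuous_id))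
  have hIoi : Set.Icc X (2*X) ⊆ Set.Ioi (0:ℝ) := fun x hx => lt_of_lt_of_le hX0 hx.1
  have hle2 : X ≤ 2*X := by linarith
  have huIcc : Set.uIcc X (2*X) = Set.Icc X (2*X) := Set.uIcc_of_le hle2
  have hωcont : ContinuousOn ω (Set.Icc X (2*X)) := (hω.contDiff.continuousOn).mono hIoi
  have hgcont : ContinuousOn (fun x => x + ω x) (Set.Icc X (2*X)) :=
    continuousOn_id.add hωcont
  have hTg : ContinuousOn (fun x => T (x + ω x)) (Set.Icc X (2*X)) :=
    hTcont.comp_continuousOn hgcont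
  have hdcont : ContinuousOn (fun x => 1 + deriv ω x) (Set.Icc X (2*X)) :=
    continuousOn_const.add
      ((hω.contDiff.continuousOn_deriv_of_isOpen isOpen_Ioi (by norm_num)).mono hIoi)
  have hderivAt : ∀ x ∈ Set.uIcc X (2*X),
      HasDerivAt (fun x => x + ω x) (1 + deriv ω x) x := by
    intro x hx
    rw [huIcc] at hx
    have hx0 : (0:ℝ) < x := hIoi hx
    have hdAt : DifferentiableAt ℝ ω x :=
      (hω.contDiff.differentiableOn (by norm_num)).differentiableAt (Ioi_mem_nhds hx0)
    exact (hasDerivAt_id x).add hdAt.hasDerivAt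
  have hgX : X ≤ X + ω X := by linarith [hω.pos X hX0]
  have hgXle : X + ω X ≤ 2*X + ω (2*X) := by
    have h1 := (hprop X le_rfl).2
    have h2 := hω.pos (2*X) (by linarith)
    linarith
  have hg2X : 2*X + ω (2*X) ≤ 3*X := by
    have := (hprop (2*X) (by linarith)).2
    linarith
  set J3 := ∫ u in X..(3*X), T u ^ 2 with hJ3
  have hTsqc : Continuous (fun u => T u ^ 2) := hTcont.pow 2
  have hb1 : (∫ x in X..(2*X), T x ^ 2) ≤ J3 := by
    have hadd := intervalIntegral.integral_add_adjacent_intervals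
      (hTsqc.intervalIntegrable (μ := volume) X (2*X)) (hTsqc.intervalIntegrable (μ := volume) (2*X) (3*X))
    have hnn : 0 ≤ ∫ x in (2*X)..(3*X), T x ^ 2 :=
      intervalIntegral.integral_nonneg (by linarith) (fun u _ => sq_nonneg _)
    rw [hJ3]
    linarith
  have hb2 : (∫ x in X..(2*X), T (x + ω x) ^ 2) ≤ 2*J3 := by
    have hF : ∀ x ∈ Set.Icc X (2*X),
        T (x + ω x)^2 ≤ 2*((1 + deriv ω x) * T (x + ω x)^2) := by
      intro x hx
      have hd := (hprop x hx.1).1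
      rcases abs_lt.mp hd with ⟨hd1, hd2⟩
      nlinarith [sq_nonneg (T (x + ω x))]
    have hi1 : IntervalIntegrable (fun x => T (x + ω x)^2) volume X (2*X) :=
      ContinuousOn.intervalIntegrable (by rw [huIcc]; exact hTg.pow 2)
    have hi2 : IntervalIntegrable (fun x => 2*((1 + deriv ω x) * T (x + ω x)^2))
        volume X (2*X) :=
      ContinuousOn.intervalIntegrable (by
        rw [huIcc]; exact continuousOn_const.mul (hdcont.mul (hTg.pow 2)))
    have hstep1 := intervalIntegral.integral_mono_on hle2 hi1 hi2 hF
    have hsub := intervalIntegral.integral_comp_smul_deriv hderivAt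
      (by rw [huIcc]; exact hdcont) hTsqc
    simp only [smul_eq_mul, Function.comp] at hsub
    have hconst : (∫ x in X..(2*X), 2*((1 + deriv ω x) * T (x + ω x)^2))
        = 2 * ∫ x in X..(2*X), (1 + deriv ω x) * T (x + ω x)^2 :=
      intervalIntegral.integral_const_mul 2 _
    have htail : (∫ u in (X + ω X)..(2*X + ω (2*X)), T u ^ 2) ≤ J3 := by
      have i1 := intervalIntegral.integral_add_adjacent_intervals
        (hTsqc.intervalIntegrable (μ := volume) X (X + ω X))
        (hTsqc.intervalIntegrable (μ := volume) (X + ω X) (2*X + ω (2*X)))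
      have i2 := intervalIntegral.integral_add_adjacent_intervals
        (hTsqc.intervalIntegrable (μ := volume) X (2*X + ω (2*X)))
        (hTsqc.intervalIntegrable (μ := volume) (2*X + ω (2*X)) (3*X))
      have n1 : 0 ≤ ∫ u in X..(X + ω X), T u ^ 2 :=
        intervalIntegral.integral_nonneg hgX (fun u _ => sq_nonneg _)
      have n2 : 0 ≤ ∫ u in (2*X + ω (2*X))..(3*X), T u ^ 2 :=
        intervalIntegral.integral_nonneg hg2X (fun u _ => sq_nonneg _)
      rw [hJ3]
      linarith
    calc (∫ x in X..(2*X), T (x + ω x)^2)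
        ≤ ∫ x in X..(2*X), 2*((1 + deriv ω x) * T (x + ω x)^2) := hstep1
      _ = 2 * ∫ x in X..(2*X), (1 + deriv ω x) * T (x + ω x)^2 := hconst
      _ = 2 * ∫ u in (X + ω X)..(2*X + ω (2*X)), T u ^ 2 := by rw [hsub]
      _ ≤ 2 * J3 := by linarith
  have hmain : J3 ≤ (2*X) * (9 * (63 / Real.sqrt A))
      + 117*(1+Real.log Tn)*(36*(1+Real.log Tn)) := by
    rw [hJ3, hTdef]
    exact aux_main_integral_bound A Tn hA1 hTn1 X hX0
  have hJ3nonneg : 0 ≤ J3 := by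
    rw [hJ3]
    exact intervalIntegral.integral_nonneg (by linarith) (fun u _ => sq_nonneg _)
  have hchain : (∫ x in X..(2*X), (∑ m ∈ Finset.Ioc A Tn,
      (r2 m : ℝ) / m * Real.sin (Real.pi * Real.sqrt m * ω x) *
        Real.sin (Real.pi * Real.sqrt m * (2 * x + ω x))) ^ 2) ≤ (3/2) * J3 := by
    have heq : (∫ x in X..(2*X), (∑ m ∈ Finset.Ioc A Tn,
        (r2 m : ℝ) / m * Real.sin (Real.pi * Real.sqrt m * ω x) *
          Real.sin (Real.pi * Real.sqrt m * (2 * x + ω x))) ^ 2)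
        = ∫ x in X..(2*X), ((T x - T (x + ω x))/2)^2 :=
      intervalIntegral.integral_congr (fun x _ => by rw [hpt x])
    rw [heq]
    have hmono : (∫ x in X..(2*X), ((T x - T (x + ω x))/2)^2)
        ≤ ∫ x in X..(2*X), (T x^2/2 + T (x + ω x)^2/2) := by
      apply intervalIntegral.integral_mono_on hle2
      · exact ContinuousOn.intervalIntegrable (by
          rw [huIcc]
          exact ((hTcont.continuousOn.sub hTg).div_const 2).pow 2)
      · exact ContinuousOn.intervalIntegrable (by
          rw [huIcc]
          exact ((hTcont.continuousOn.pow 2).div_const 2).add ((hTg.pow 2).div_const 2))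
      · intro x _
        nlinarith [sq_nonneg (T x + T (x + ω x))]
    have hadd : (∫ x in X..(2*X), (T x^2/2 + T (x + ω x)^2/2))
        = (∫ x in X..(2*X), T x^2)/2 + (∫ x in X..(2*X), T (x + ω x)^2)/2 := by
      rw [intervalIntegral.integral_add
          ((hTsqc.div_const 2).intervalIntegrable (μ := volume) _ _)
          (ContinuousOn.intervalIntegrable (by
            rw [huIcc]; exact (hTg.pow 2).div_const 2)),
        intervalIntegral.integral_div, intervalIntegral.integral_div]
    rw [hadd] at hmono
    calc (∫ x in X..(2*X), ((T x - T (x + ω x))/2)^2)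
        ≤ (∫ x in X..(2*X), T x^2)/2 + (∫ x in X..(2*X), T (x + ω x)^2)/2 := hmono
      _ ≤ J3/2 + (2*J3)/2 := add_le_add (by linarith) (by linarith)
      _ = (3/2)*J3 := by ring
  -- final numerics
  have hYp : (0:ℝ) < Y ^ ((-1:ℝ)/4) := Real.rpow_pos_of_pos hY0 _
  have hlogX : (1:ℝ) ≤ Real.log X := by
    rw [Real.le_log_iff_exp_le hX0]
    calc Real.exp 1 ≤ 2.7182818286 := le_of_lt Real.exp_one_lt_d9
      _ ≤ X := by linarith
  have hlog2 : (1:ℝ) ≤ (Real.log X)^2 := by nlinarith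
  have hlogTn : 1 + Real.log Tn ≤ 3 * Real.log X := by
    have h1 : Real.log (Tn:ℝ) ≤ Real.log (X^2) := Real.log_le_log hTnpos hTnX
    rw [Real.log_pow] at h1
    push_cast at h1
    linarith
  have hlogTn0 : (0:ℝ) ≤ 1 + Real.log Tn := by
    have := Real.log_natCast_nonneg Tn
    linarith
  have hf2 : (1 + Real.log Tn)^2 ≤ 9 * (Real.log X)^2 := by nlinarith
  have hsY0 : (0:ℝ) < Real.sqrt Y := Real.sqrt_pos.mpr hY0
  have hsA0 : (0:ℝ) < Real.sqrt A := Real.sqrt_pos.mpr (by linarith)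
  have hsA : 63 / Real.sqrt A ≤ 94.5 / Real.sqrt Y := by
    rw [div_le_div_iff₀ hsA0 hsY0]
    have h225 : Real.sqrt (2.25 * A) = 1.5 * Real.sqrt A := by
      rw [show (2.25:ℝ) * A = 1.5^2 * A by norm_num,
        Real.sqrt_mul (by positivity) _, Real.sqrt_sq (by norm_num)]
    have hYle : Real.sqrt Y ≤ 1.5 * Real.sqrt A := by
      rw [← h225]
      exact Real.sqrt_le_sqrt (by linarith)
    nlinarith [hsA0.le]
  have hf1 : 1 / Real.sqrt Y ≤ Y ^ ((-1:ℝ)/4) := by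
    have e : Y ^ ((-1:ℝ)/2) = 1 / Real.sqrt Y := by
      rw [show ((-1:ℝ)/2) = -(1/2) by norm_num, Real.rpow_neg hY0.le,
        ← Real.sqrt_eq_rpow, one_div]
    rw [← e]
    exact Real.rpow_le_rpow_of_exponent_le hY (by norm_num)
  have hf3 : 1 / X ≤ Y ^ ((-1:ℝ)/4) := by
    have hq : Y ^ ((1:ℝ)/4) ≤ X := by
      have e : Y ^ ((1:ℝ)/4) = Real.sqrt (Real.sqrt Y) := by
        rw [show ((1:ℝ)/4) = (1/2)*(1/2) by norm_num, Real.rpow_mul hY0.le,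
          ← Real.sqrt_eq_rpow, ← Real.sqrt_eq_rpow]
      have hXX : Real.sqrt X ≤ X := by
        have h := Real.sqrt_le_sqrt (show X ≤ X^2 by nlinarith)
        rwa [Real.sqrt_sq hX0.le] at h
      calc Y ^ ((1:ℝ)/4) = Real.sqrt (Real.sqrt Y) := e
        _ ≤ Real.sqrt X := Real.sqrt_le_sqrt hX2.le
        _ ≤ X := hXX
    have hq0 : (0:ℝ) < Y ^ ((1:ℝ)/4) := Real.rpow_pos_of_pos hY0 _
    have h := one_div_le_one_div_of_le hq0 hq
    rw [show Y ^ ((-1:ℝ)/4) = 1 / Y ^ ((1:ℝ)/4) by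
      rw [show ((-1:ℝ)/4) = -(1/4) by norm_num, Real.rpow_neg hY0.le]
      norm_num]
    exact h
  calc (1/X) * ∫ x in X..(2*X), (∑ m ∈ Finset.Ioc A Tn,
        (r2 m : ℝ) / m * Real.sin (Real.pi * Real.sqrt m * ω x) *
          Real.sin (Real.pi * Real.sqrt m * (2 * x + ω x))) ^ 2
      ≤ (1/X) * ((3/2) * J3) := by
        apply mul_le_mul_of_nonneg_left hchain (by positivity)
    _ ≤ (1/X) * ((3/2) * ((2*X) * (9 * (63 / Real.sqrt A))
          + 117*(1+Real.log Tn)*(36*(1+Real.log Tn)))) := by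
        apply mul_le_mul_of_nonneg_left _ (by positivity)
        apply mul_le_mul_of_nonneg_left hmain (by norm_num)
    _ = 27 * (63 / Real.sqrt A) + 6318 * ((1+Real.log Tn)^2 * (1/X)) := by
        field_simp
        ring
    _ ≤ 27 * (94.5 / Real.sqrt Y) + 6318 * ((9*(Real.log X)^2) * (Y ^ ((-1:ℝ)/4))) := by
        apply add_le_add
        · exact mul_le_mul_of_nonneg_left hsA (by norm_num)
        · apply mul_le_mul_of_nonneg_left _ (by norm_num)
          apply mul_le_mul hf2 hf3 (by positivity) (by positivity)
    _ = 2551.5 * (1/Real.sqrt Y) + 56862 * ((Real.log X)^2 * Y ^ ((-1:ℝ)/4)) := by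
        ring
    _ ≤ 2551.5 * (Y ^ ((-1:ℝ)/4)) + 56862 * ((Real.log X)^2 * Y ^ ((-1:ℝ)/4)) := by
        apply add_le_add _ le_rfl
        exact mul_le_mul_of_nonneg_left hf1 (by norm_num)
    _ ≤ 60000 * Y ^ ((-1:ℝ)/4) * Real.log X ^ 2 := by
        nlinarith [mul_le_mul_of_nonneg_left hlog2 hYp.le]
end
end

section
/- For every integer ℓ ≥ 2 there exists a constant C_ℓ > 0 such that for every real number w, every integer m ≥ 1 and every real y ≥ 1, |P(w;m,ℓ,y)| ≤ C_ℓ·|w|^ℓ·r₂(m)^ℓ/m^{ℓ/2}, where P(w;m,ℓ,y) = (μ(m)²/m^ℓ)·∑_{e₁,…,e_ℓ ∈ {±1}} (∏_{i=1}^ℓ e_i)·∑_{k₁,…,k_ℓ ≤ y, e₁k₁+⋯+e_ℓk_ℓ = 0} ∏_{i=1}^ℓ (r₂(m·k_i²)/k_i²)·sin(π·√m·k_i·w). -/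
open MeasureTheory Filter Real

noncomputable section

/-- The sign `±1` attached to a Boolean. -/
def pmOne (b : Bool) : ℝ := if b then 1 else -1

/-- The integer sign `±1` attached to a Boolean. -/
def pmInt (b : Bool) : ℤ := if b then 1 else -1

/-- `P(w;m,ℓ,y)`, the constrained sum from the diagonal analysis. -/
def Pterm (w : ℝ) (m : ℕ) (l : ℕ) (y : ℝ) : ℝ :=
  ((ArithmeticFunction.moebius m : ℤ) : ℝ) ^ 2 / (m : ℝ) ^ l *
    ∑ e : Fin l → Bool, (∏ i, pmOne (e i)) *
      ∑ k ∈ (Fintype.piFinset fun _ : Fin l => Finset.Icc 1 ⌊y⌋₊).filter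
          (fun k => (∑ i, pmInt (e i) * (k i : ℤ)) = 0),
        ∏ i, (r2 (m * k i ^ 2) : ℝ) / (k i : ℝ) ^ 2 *
          Real.sin (Real.pi * Real.sqrt m * k i * w)

namespace PtermAux

open Zsqrtd

/-- Representations of `n` as a Gaussian-integer norm. -/
def GS (n : ℕ) : Set GaussianInt := {z | z.norm = (n : ℤ)}

lemma mem_GS {n : ℕ} {z : GaussianInt} : z ∈ GS n ↔ z.norm = (n : ℤ) := Iff.rfl

lemma GS_finite (n : ℕ) : (GS n).Finite := by
  have h : GS n ⊆ (fun p : ℤ × ℤ => (⟨p.1, p.2⟩ : GaussianInt)) ''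
      (Set.Icc (-(n:ℤ)) n ×ˢ Set.Icc (-(n:ℤ)) n) := by
    intro z hz
    have hzn : z.norm = (n : ℤ) := hz
    have hn : z.re ^ 2 + z.im ^ 2 = (n : ℤ) := by
      rw [Zsqrtd.norm_def] at hzn; linarith [hzn]
    refine ⟨(z.re, z.im), ?_, rfl⟩
    have h3 : |z.re| ≤ (n : ℤ) := by nlinarith [abs_nonneg z.re, sq_abs z.re, sq_nonneg z.im]
    have h4 : |z.im| ≤ (n : ℤ) := by nlinarith [abs_nonneg z.im, sq_abs z.im, sq_nonneg z.re]
    rw [abs_le] at h3 h4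
    exact ⟨Set.mem_Icc.2 ⟨h3.1, h3.2⟩, Set.mem_Icc.2 ⟨h4.1, h4.2⟩⟩
  exact Set.Finite.subset
    (Set.Finite.image _ (Set.Finite.prod (Set.finite_Icc _ _) (Set.finite_Icc _ _))) h

lemma star_dvd {a b : GaussianInt} (h : a ∣ b) : star a ∣ star b := by
  obtain ⟨c, rfl⟩ := h; exact ⟨star c, by rw [star_mul]; ring⟩

lemma prime_dvd_of_dvd_norm {q : GaussianInt} (hq : Prime q) (hqs : Associated (star q) q)
    {z : GaussianInt} (h : q ∣ (z.norm : GaussianInt)) : q ∣ z := by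
  rw [Zsqrtd.norm_eq_mul_conj] at h
  rcases hq.2.2 _ _ h with h1 | h1
  · exact h1
  · have h2 := star_dvd h1
    rw [star_star] at h2
    exact (hqs.symm.dvd).trans h2

lemma norm_natAbs_two_le {q : GaussianInt} (hq : Prime q) : 2 ≤ q.norm.natAbs := by
  have h0 : q.norm.natAbs ≠ 0 := by
    simp only [ne_eq, Int.natAbs_eq_zero, GaussianInt.norm_eq_zero]
    exact hq.1
  have h1 : q.norm.natAbs ≠ 1 := fun h => hq.2.1 (Zsqrtd.norm_eq_one_iff.1 h)
  omega

/-- Decompose off the maximal power of a prime. -/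
lemma exists_pow_mul_not_dvd {q : GaussianInt} (hq : Prime q) :
    ∀ z : GaussianInt, z ≠ 0 → ∃ s w, z = q ^ s * w ∧ ¬ q ∣ w := by
  have hq2 : 2 ≤ q.norm.natAbs := norm_natAbs_two_le hq
  intro z
  induction z using (measure (fun z : GaussianInt => z.norm.natAbs)).wf.induction with
  | _ z IH =>
    intro hz
    by_cases hdvd : q ∣ z
    · obtain ⟨w, rfl⟩ := hdvd
      have hw : w ≠ 0 := by rintro rfl; simp at hz
      have hlt : w.norm.natAbs < (q * w).norm.natAbs := by
        rw [Zsqrtd.norm_mul, Int.natAbs_mul]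
        have hwpos : 0 < w.norm.natAbs := by
          simp only [Int.natAbs_pos, ne_eq, GaussianInt.norm_eq_zero]; exact hw
        nlinarith
      obtain ⟨s, w', hw', hnd⟩ := IH w hlt hw
      exact ⟨s + 1, w', by rw [hw']; ring, hnd⟩
    · exact ⟨0, z, by ring, hdvd⟩

lemma prime_of_norm_prime {z : GaussianInt} (hz : Nat.Prime z.norm.natAbs) : Prime z := by
  rw [← UniqueFactorizationMonoid.irreducible_iff_prime]
  constructor
  · intro hu
    rw [← Zsqrtd.norm_eq_one_iff] at hu
    rw [hu] at hz
    exact Nat.not_prime_one hz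
  · intro a b hab
    have hmul : a.norm.natAbs * b.norm.natAbs = z.norm.natAbs := by
      rw [hab, Zsqrtd.norm_mul, Int.natAbs_mul]
    rcases (Nat.Prime.eq_one_or_self_of_dvd hz a.norm.natAbs ⟨b.norm.natAbs, hmul.symm⟩) with h | h
    · exact Or.inl (Zsqrtd.norm_eq_one_iff.1 h)
    · right
      apply Zsqrtd.norm_eq_one_iff.1
      have hzpos : 0 < z.norm.natAbs := hz.pos
      have h2 : z.norm.natAbs * b.norm.natAbs = z.norm.natAbs * 1 := by
        rw [mul_one, ← h]; exact hmul.trans h.symm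
      exact Nat.eq_of_mul_eq_mul_left hzpos h2

lemma norm_pow (z : GaussianInt) (k : ℕ) : (z ^ k).norm = z.norm ^ k := by
  induction k with
  | zero => simp [Zsqrtd.norm_one]
  | succ k IH => rw [pow_succ, pow_succ, Zsqrtd.norm_mul, IH]

lemma dvd_cast_norm_of_int_dvd {p : ℕ} {z : GaussianInt} (h : (p : ℤ) ∣ z.norm) :
    (p : GaussianInt) ∣ (z.norm : GaussianInt) := by
  obtain ⟨c, hc⟩ := h
  exact ⟨(c : GaussianInt), by rw [hc]; push_cast; ring⟩

lemma inert_descent {p : ℕ} (hp : p.Prime) (hprime : Prime (p : GaussianInt)) :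
    ∀ c : ℕ, ∀ z : GaussianInt, (p : ℤ) ^ (2 * c) ∣ z.norm → (p : GaussianInt) ^ c ∣ z := by
  intro c
  induction c with
  | zero => intro z _; simp
  | succ c IH =>
    intro z hdvd
    have hp0 : (p : ℤ) ≠ 0 := by exact_mod_cast hp.ne_zero
    have hpz : (p : GaussianInt) ∣ z := by
      apply prime_dvd_of_dvd_norm hprime (by rw [star_natCast])
      apply dvd_cast_norm_of_int_dvd
      exact dvd_trans (dvd_pow_self (p : ℤ) (by omega)) hdvd
    obtain ⟨z₁, rfl⟩ := hpz
    have hnorm : ((p : GaussianInt) * z₁).norm = (p : ℤ) ^ 2 * z₁.norm := by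
      rw [Zsqrtd.norm_mul, Zsqrtd.norm_natCast]; ring
    rw [hnorm] at hdvd
    have h2 : (p : ℤ) ^ 2 * (p : ℤ) ^ (2 * c) ∣ (p : ℤ) ^ 2 * z₁.norm := by
      rwa [← pow_add, show 2 + 2 * c = 2 * (c + 1) by ring]
    have h3 : (p : ℤ) ^ (2 * c) ∣ z₁.norm :=
      (mul_dvd_mul_iff_left (pow_ne_zero 2 hp0)).1 h2
    obtain ⟨w, hw⟩ := IH z₁ h3
    exact ⟨w, by rw [hw]; ring⟩

/-- The key peeling lemma: `r₂(p^{2a}·n) ≤ (2a+1)·r₂(n)` at the level of Gaussian sets. -/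
lemma GS_peel {p : ℕ} (hp : p.Prime) (a n : ℕ) :
    (GS (p ^ (2 * a) * n)).ncard ≤ (2 * a + 1) * (GS n).ncard := by
  haveI : Fact p.Prime := ⟨hp⟩
  have hp0 : (p : ℤ) ≠ 0 := by exact_mod_cast hp.ne_zero
  -- obtain the covering set Δ
  obtain ⟨Δ, hcard, hcover⟩ : ∃ Δ : Finset GaussianInt, Δ.card ≤ 2 * a + 1 ∧
      ∀ z ∈ GS (p ^ (2 * a) * n), ∃ δ ∈ Δ, δ ∣ z ∧ δ.norm = (p : ℤ) ^ (2 * a) := by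
    by_cases hp3 : p % 4 = 3
    · -- inert case
      have hprime : Prime (p : GaussianInt) :=
        (GaussianInt.prime_iff_mod_four_eq_three_of_nat_prime p).2 hp3
      refine ⟨{(p : GaussianInt) ^ a}, by simp, ?_⟩
      intro z hz
      refine ⟨(p : GaussianInt) ^ a, Finset.mem_singleton_self _, ?_, ?_⟩
      · apply inert_descent hp hprime a z
        have hzn : z.norm = ((p ^ (2 * a) * n : ℕ) : ℤ) := hz
        rw [hzn]; push_cast; exact Dvd.intro _ rfl
      · rw [norm_pow, Zsqrtd.norm_natCast]; ring
    · -- split / ramified case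
      obtain ⟨u, v, huv⟩ := Nat.Prime.sq_add_sq (p := p) hp3
      set gp : GaussianInt := ⟨(u : ℤ), (v : ℤ)⟩ with hgp_def
      have hgpnorm : gp.norm = (p : ℤ) := by
        rw [Zsqrtd.norm_def]; push_cast [← huv]; ring
      have hgpprime : Prime gp := by
        apply prime_of_norm_prime
        rw [hgpnorm]; simpa using hp
      have hgp'norm : (star gp).norm = (p : ℤ) := by rw [Zsqrtd.norm_conj, hgpnorm]
      have hgp'prime : Prime (star gp) := by
        apply prime_of_norm_prime
        rw [hgp'norm]; simpa using hp
      have hgpgp' : (gp * star gp : GaussianInt) = ((p : ℤ) : GaussianInt) := by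
        rw [← Zsqrtd.norm_eq_mul_conj, hgpnorm]
      refine ⟨(Finset.range (2 * a + 1)).image (fun c => gp ^ c * (star gp) ^ (2 * a - c)),
        le_trans (Finset.card_image_le) (by simp), ?_⟩
      intro z hz
      have hznorm : z.norm = ((p : ℤ)) ^ (2 * a) * (n : ℤ) := by
        have : z.norm = ((p ^ (2 * a) * n : ℕ) : ℤ) := hz
        rw [this]; push_cast; ring
      have hnormδ : ∀ c, c ≤ 2 * a → (gp ^ c * (star gp) ^ (2 * a - c)).norm = (p : ℤ) ^ (2 * a) := by
        intro c hc
        rw [Zsqrtd.norm_mul, norm_pow, norm_pow, hgpnorm, hgp'norm, ← pow_add]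
        congr 1; omega
      by_cases hz0 : z = 0
      · refine ⟨gp ^ 0 * (star gp) ^ (2 * a - 0), Finset.mem_image_of_mem _ (by simp), ?_, hnormδ 0 (by omega)⟩
        rw [hz0]; exact dvd_zero _
      -- decompose z
      obtain ⟨s, ζ₁, hz1, hnd1⟩ := exists_pow_mul_not_dvd hgpprime z hz0
      have hζ₁0 : ζ₁ ≠ 0 := by rintro rfl; rw [mul_zero] at hz1; exact hz0 hz1
      obtain ⟨t, ζ, hz2, hnd2⟩ := exists_pow_mul_not_dvd hgp'prime ζ₁ hζ₁0
      have hndζ : ¬ gp ∣ ζ := fun h => hnd1 (by rw [hz2]; exact Dvd.dvd.mul_left h _)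
      have hpNζ : ¬ (p : ℤ) ∣ ζ.norm := by
        intro hdvd
        have hgpgp'' : gp * star gp = (p : GaussianInt) := by rw [hgpgp']; push_cast; ring
        have h1 : gp ∣ (ζ.norm : GaussianInt) :=
          dvd_trans ⟨star gp, hgpgp''.symm⟩ (dvd_cast_norm_of_int_dvd hdvd)
        rw [Zsqrtd.norm_eq_mul_conj] at h1
        rcases hgpprime.2.2 _ _ h1 with h2 | h2
        · exact hndζ h2
        · have h3 := star_dvd h2
          rw [star_star] at h3
          exact hnd2 h3
      have hznorm2 : z.norm = (p : ℤ) ^ (s + t) * ζ.norm := by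
        rw [hz1, hz2, Zsqrtd.norm_mul, Zsqrtd.norm_mul, norm_pow, norm_pow, hgpnorm, hgp'norm,
          pow_add]; ring
      have hst : 2 * a ≤ s + t := by
        by_contra hlt
        push_neg at hlt
        have h4 : (p : ℤ) ^ (s + t) * (p : ℤ) ∣ (p : ℤ) ^ (s + t) * ζ.norm := by
          rw [← pow_succ, ← hznorm2, hznorm]
          exact dvd_mul_of_dvd_left (pow_dvd_pow _ (by omega)) _
        exact hpNζ ((mul_dvd_mul_iff_left (pow_ne_zero (s + t) hp0)).1 h4)
      set c := min s (2 * a) with hc_def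
      refine ⟨gp ^ c * (star gp) ^ (2 * a - c),
        Finset.mem_image_of_mem _ (Finset.mem_range.2 (by omega)), ?_, hnormδ c (by omega)⟩
      have hdvd1 : gp ^ c ∣ gp ^ s := pow_dvd_pow _ (by omega)
      have hdvd2 : (star gp) ^ (2 * a - c) ∣ (star gp) ^ t := pow_dvd_pow _ (by omega)
      have : gp ^ c * (star gp) ^ (2 * a - c) ∣ gp ^ s * (star gp) ^ t :=
        mul_dvd_mul hdvd1 hdvd2
      refine this.trans ?_
      rw [hz1, hz2]
      exact ⟨ζ, by ring⟩
  -- now count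
  have hfin : (GS n).Finite := GS_finite n
  have hsub : GS (p ^ (2 * a) * n) ⊆
      ↑(Δ.biUnion (fun δ => hfin.toFinset.image (fun w => δ * w))) := by
    intro z hz
    obtain ⟨δ, hδΔ, hδdvd, hδnorm⟩ := hcover z hz
    obtain ⟨w, rfl⟩ := hδdvd
    have hwnorm : w.norm = (n : ℤ) := by
      have h1 : (δ * w).norm = ((p ^ (2 * a) * n : ℕ) : ℤ) := hz
      rw [Zsqrtd.norm_mul, hδnorm] at h1
      have h2 : (p : ℤ) ^ (2 * a) * w.norm = (p : ℤ) ^ (2 * a) * (n : ℤ) := by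
        rw [h1]; push_cast; ring
      exact mul_left_cancel₀ (pow_ne_zero _ hp0) h2
    rw [Finset.mem_coe, Finset.mem_biUnion]
    exact ⟨δ, hδΔ, Finset.mem_image.2 ⟨w, hfin.mem_toFinset.2 hwnorm, rfl⟩⟩
  calc (GS (p ^ (2 * a) * n)).ncard
      ≤ (↑(Δ.biUnion (fun δ => hfin.toFinset.image (fun w => δ * w))) : Set GaussianInt).ncard :=
        Set.ncard_le_ncard hsub (Finset.finite_toSet _)
    _ = (Δ.biUnion (fun δ => hfin.toFinset.image (fun w => δ * w))).card := Set.ncard_coe_finset _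
    _ ≤ ∑ δ ∈ Δ, (hfin.toFinset.image (fun w => δ * w)).card := Finset.card_biUnion_le
    _ ≤ ∑ δ ∈ Δ, (GS n).ncard := by
        refine Finset.sum_le_sum fun δ _ => ?_
        rw [Set.ncard_eq_toFinset_card _ hfin]
        exact Finset.card_image_le
    _ = Δ.card * (GS n).ncard := by rw [Finset.sum_const, smul_eq_mul]
    _ ≤ (2 * a + 1) * (GS n).ncard := Nat.mul_le_mul_right _ hcard

/-- `∏_{p | k} (2·v_p(k)+1)`, a divisor-type bound function. -/
def Dfac (k : ℕ) : ℕ := k.primeFactors.prod (fun p => 2 * k.factorization p + 1)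

lemma Dfac_one : Dfac 1 = 1 := by simp [Dfac]

lemma GS_mul_sq_le (m : ℕ) : ∀ k : ℕ, k ≠ 0 → (GS (m * k ^ 2)).ncard ≤ Dfac k * (GS m).ncard := by
  intro k
  induction k using Nat.strong_induction_on with
  | _ k IH =>
    intro hk0
    by_cases hk1 : k = 1
    · subst hk1; simp [Dfac_one]
    have hp : (k.minFac).Prime := Nat.minFac_prime hk1
    set p := k.minFac with hp_def
    set a := k.factorization p with ha_def
    set j := ordCompl[p] k with hj_def
    have hkeq : p ^ a * j = k := Nat.ordProj_mul_ordCompl_eq_self k p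
    have ha : 0 < a := hp.factorization_pos_of_dvd hk0 (Nat.minFac_dvd k)
    have hj0 : j ≠ 0 := (Nat.ordCompl_pos p hk0).ne'
    have hjlt : j < k := by
      have hpa : 1 < p ^ a := by
        have := hp.two_le
        calc 1 < p := by omega
        _ ≤ p ^ a := Nat.le_self_pow ha.ne' p
      calc j < p ^ a * j := by
            have := Nat.pos_of_ne_zero hj0; nlinarith
        _ = k := hkeq
    have hsplit : m * k ^ 2 = p ^ (2 * a) * (m * j ^ 2) := by
      rw [← hkeq]; ring
    have h1 : (GS (m * k ^ 2)).ncard ≤ (2 * a + 1) * (GS (m * j ^ 2)).ncard := by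
      rw [hsplit]; exact GS_peel hp a (m * j ^ 2)
    have h2 : (GS (m * j ^ 2)).ncard ≤ Dfac j * (GS m).ncard := IH j hjlt hj0
    have hDfac : Dfac k = (2 * a + 1) * Dfac j := by
      have hjfact : j.factorization = k.factorization.erase p := Nat.factorization_ordCompl k p
      have hjpf : j.primeFactors = k.primeFactors.erase p := by
        rw [← Nat.support_factorization, hjfact, Finsupp.support_erase, Nat.support_factorization]
      have hpmem : p ∈ k.primeFactors := Nat.mem_primeFactors.2 ⟨hp, Nat.minFac_dvd k, hk0⟩
      rw [Dfac, ← Finset.mul_prod_erase _ _ hpmem]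
      congr 1
      rw [Dfac, hjpf]
      refine Finset.prod_congr rfl fun q hq => ?_
      have hqne : q ≠ p := (Finset.mem_erase.1 hq).1
      rw [hjfact, Finsupp.erase_ne hqne]
    calc (GS (m * k ^ 2)).ncard ≤ (2 * a + 1) * (GS (m * j ^ 2)).ncard := h1
      _ ≤ (2 * a + 1) * (Dfac j * (GS m).ncard) := Nat.mul_le_mul_left _ h2
      _ = Dfac k * (GS m).ncard := by rw [hDfac]; ring


lemma r2_eq_GS (n : ℕ) : r2 n = (GS n).ncard := by
  have hinj : Function.Injective (fun z : GaussianInt => (z.re, z.im)) := by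
    intro a b h
    simp only [Prod.mk.injEq] at h
    exact Zsqrtd.ext h.1 h.2
  have himg : {p : ℤ × ℤ | p.1 ^ 2 + p.2 ^ 2 = (n : ℤ)} =
      (fun z : GaussianInt => (z.re, z.im)) '' GS n := by
    ext ⟨x, y⟩
    simp only [Set.mem_setOf_eq, Set.mem_image]
    constructor
    · intro h
      refine ⟨⟨x, y⟩, ?_, rfl⟩
      show Zsqrtd.norm _ = (n : ℤ)
      rw [Zsqrtd.norm_def]; ring_nf; ring_nf at h; linarith
    · rintro ⟨z, hz, h⟩
      have hzn : z.norm = (n : ℤ) := hz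
      rw [Zsqrtd.norm_def] at hzn
      have : z.re = x ∧ z.im = y := by
        constructor <;> [exact congrArg Prod.fst h; exact congrArg Prod.snd h]
      rcases this with ⟨rfl, rfl⟩
      ring_nf; ring_nf at hzn; linarith
  rw [r2, himg, Set.ncard_image_of_injective _ hinj]

lemma r2_mul_sq_le (m k : ℕ) (hk : k ≠ 0) : r2 (m * k ^ 2) ≤ Dfac k * r2 m := by
  rw [r2_eq_GS, r2_eq_GS]
  exact GS_mul_sq_le m k hk

lemma two_mul_add_one_le_three_pow (a : ℕ) : (2 * a + 1 : ℝ) ≤ 3 ^ a := by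
  induction a with
  | zero => norm_num
  | succ a IH =>
    have h3 : (0:ℝ) ≤ 3 ^ a := by positivity
    push_cast
    push_cast at IH
    calc (2 * ((a:ℝ) + 1) + 1) = (2 * a + 1) + 2 := by ring
      _ ≤ 3 ^ a + 2 := by linarith
      _ ≤ 3 ^ a + 2 * (3 ^ a) := by nlinarith
      _ = 3 ^ (a + 1) := by ring
  
/-- Divisor bound: `Dfac k = O(k^β)` for every `β > 0`. -/
lemma Dfac_le_rpow {β : ℝ} (hβ : 0 < β) :
    ∃ C : ℝ, 1 ≤ C ∧ ∀ k : ℕ, k ≠ 0 → (Dfac k : ℝ) ≤ C * (k : ℝ) ^ β := by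
  classical
  set CB : ℝ := max 1 (3 / (β * Real.log 2)) with hCB_def
  have hCB1 : 1 ≤ CB := le_max_left _ _
  have hlog2 : 0 < Real.log 2 := Real.log_pos (by norm_num)
  -- pointwise bound for a prime power
  have hkey : ∀ p : ℕ, p.Prime → ∀ a : ℕ,
      (2 * a + 1 : ℝ) ≤ (if ((p : ℝ) ^ β < 3) then CB else 1) * (((p : ℝ) ^ a) ^ β) := by
    intro p hpp a
    have hp2 : (2 : ℝ) ≤ (p : ℝ) := by exact_mod_cast hpp.two_le
    have hp0 : (0 : ℝ) < (p : ℝ) := by linarith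
    have hpa0 : (0 : ℝ) < (p : ℝ) ^ a := by positivity
    by_cases hsmall : (p : ℝ) ^ β < 3
    · rw [if_pos hsmall]
      rcases Nat.eq_zero_or_pos a with rfl | ha
      · simpa using hCB1
      -- a ≥ 1 case
      have hpow : ((p : ℝ) ^ a) ^ β ≥ a * β * Real.log 2 := by
        have h2a : ((2 : ℝ) ^ a) ^ β ≤ ((p : ℝ) ^ a) ^ β := by
          apply Real.rpow_le_rpow (by positivity) (pow_le_pow_left₀ (by norm_num) hp2 a) hβ.le
        have hexp : ((2 : ℝ) ^ a) ^ β = Real.exp (a * β * Real.log 2) := by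
          rw [← Real.rpow_natCast 2 a, ← Real.rpow_mul (by norm_num : (0:ℝ) ≤ 2),
            Real.rpow_def_of_pos (by norm_num : (0:ℝ) < 2)]
          ring_nf
        have := Real.add_one_le_exp (a * β * Real.log 2)
        nlinarith [h2a, hexp ▸ this]
      have hCB2 : 3 / (β * Real.log 2) ≤ CB := le_max_right _ _
      have hβlog : 0 < β * Real.log 2 := by positivity
      have h3a : (2 * a + 1 : ℝ) ≤ 3 * a := by
        have : (1:ℝ) ≤ (a:ℝ) := by exact_mod_cast ha
        linarith
      calc (2 * a + 1 : ℝ) ≤ 3 * a := h3a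
        _ = (3 / (β * Real.log 2)) * (a * β * Real.log 2) := by
            field_simp
        _ ≤ CB * (((p : ℝ) ^ a) ^ β) := by
            apply mul_le_mul hCB2 hpow (by positivity) (by linarith)
    · rw [if_neg hsmall]
      push_neg at hsmall
      rw [one_mul]
      calc (2 * a + 1 : ℝ) ≤ 3 ^ a := two_mul_add_one_le_three_pow a
        _ ≤ ((p : ℝ) ^ β) ^ a := pow_le_pow_left₀ (by norm_num) hsmall a
        _ = ((p : ℝ) ^ a) ^ β := by
            rw [← Real.rpow_natCast ((p:ℝ) ^ β) a, ← Real.rpow_mul hp0.le, mul_comm,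
              Real.rpow_mul hp0.le, Real.rpow_natCast]
  -- the number of "small" primes is bounded
  set P : ℕ := ⌈(3 : ℝ) ^ (1 / β)⌉₊ + 1 with hP_def
  have hCBP : 1 ≤ CB ^ P := one_le_pow₀ hCB1
  refine ⟨CB ^ P, hCBP, ?_⟩
  intro k hk0
  set T := k.primeFactors with hT_def
  have hcast : (Dfac k : ℝ) = ∏ p ∈ T, (2 * (k.factorization p) + 1 : ℝ) := by
    rw [Dfac]; push_cast; rfl
  have hstep1 : (Dfac k : ℝ) ≤
      ∏ p ∈ T, ((if ((p : ℝ) ^ β < 3) then CB else 1) * (((p : ℝ) ^ (k.factorization p)) ^ β)) := by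
    rw [hcast]
    refine Finset.prod_le_prod (fun p _ => by positivity) (fun p hpT => ?_)
    exact hkey p (Nat.prime_of_mem_primeFactors hpT) _
  have hstep2 : ∏ p ∈ T, ((if ((p : ℝ) ^ β < 3) then CB else 1) *
        (((p : ℝ) ^ (k.factorization p)) ^ β))
      = (∏ p ∈ T, (if ((p : ℝ) ^ β < 3) then CB else 1)) *
        ∏ p ∈ T, (((p : ℝ) ^ (k.factorization p)) ^ β) := Finset.prod_mul_distrib
  have hstep3 : ∏ p ∈ T, (((p : ℝ) ^ (k.factorization p)) ^ β) = (k : ℝ) ^ β := by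
    rw [Real.finset_prod_rpow T _ (fun p _ => by positivity) β]
    congr 1
    have hprod := Nat.factorization_prod_pow_eq_self hk0
    calc ∏ p ∈ T, (p : ℝ) ^ (k.factorization p)
        = ((∏ p ∈ T, p ^ (k.factorization p) : ℕ) : ℝ) := by push_cast; rfl
      _ = (k : ℝ) := by rw [show ∏ p ∈ T, p ^ (k.factorization p) = k from hprod]
  have hsub : T.filter (fun p : ℕ => (p : ℝ) ^ β < 3) ⊆ Finset.range P := by
    intro p hpmem
    rw [Finset.mem_range]
    have hsmall : (p : ℝ) ^ β < 3 := (Finset.mem_filter.1 hpmem).2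
    have hp0 : (0:ℝ) ≤ (p:ℝ) := Nat.cast_nonneg p
    have h1 : ((p : ℝ) ^ β) ^ (1/β) < (3:ℝ) ^ (1/β) := by
      apply Real.rpow_lt_rpow (by positivity) hsmall (by positivity)
    rw [← Real.rpow_mul hp0, mul_one_div, div_self hβ.ne', Real.rpow_one] at h1
    have h2 : (3:ℝ) ^ (1/β) ≤ (⌈(3 : ℝ) ^ (1 / β)⌉₊ : ℝ) := Nat.le_ceil _
    have h4 : p < ⌈(3 : ℝ) ^ (1 / β)⌉₊ := by exact_mod_cast lt_of_lt_of_le h1 h2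
    omega
  have hstep4 : (∏ p ∈ T, (if ((p : ℝ) ^ β < 3) then CB else 1)) ≤ CB ^ P := by
    rw [← Finset.prod_filter_mul_prod_filter_not T (fun p : ℕ => (p : ℝ) ^ β < 3)]
    have h2 : ∏ p ∈ T.filter (fun p : ℕ => ¬ ((p : ℝ) ^ β < 3)),
        (if ((p : ℝ) ^ β < 3) then CB else 1) = 1 := by
      apply Finset.prod_eq_one
      intro p hp; rw [if_neg (Finset.mem_filter.1 hp).2]
    have h1 : ∏ p ∈ T.filter (fun p : ℕ => ((p : ℝ) ^ β < 3)),
        (if ((p : ℝ) ^ β < 3) then CB else 1)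
        ≤ CB ^ (T.filter (fun p : ℕ => ((p:ℝ)^β < 3))).card := by
      rw [← Finset.prod_const]
      refine Finset.prod_le_prod (fun p _ => by positivity) (fun p hp => ?_)
      rw [if_pos (Finset.mem_filter.1 hp).2]
    have hcard : (T.filter (fun p : ℕ => ((p:ℝ)^β < 3))).card ≤ P := by
      calc (T.filter (fun p : ℕ => ((p:ℝ)^β < 3))).card ≤ (Finset.range P).card :=
            Finset.card_le_card hsub
        _ = P := Finset.card_range P
    rw [h2, mul_one]
    exact h1.trans (pow_le_pow_right₀ hCB1 hcard)
  calc (Dfac k : ℝ)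
      ≤ ∏ p ∈ T, ((if ((p : ℝ) ^ β < 3) then CB else 1) *
          (((p : ℝ) ^ (k.factorization p)) ^ β)) := hstep1
    _ = (∏ p ∈ T, (if ((p : ℝ) ^ β < 3) then CB else 1)) *
          ∏ p ∈ T, (((p : ℝ) ^ (k.factorization p)) ^ β) := hstep2
    _ ≤ CB ^ P * (k : ℝ) ^ β := by
        rw [hstep3]
        exact mul_le_mul_of_nonneg_right hstep4 (by positivity)

lemma pmInt_ne_zero (b : Bool) : pmInt b ≠ 0 := by cases b <;> simp [pmInt]

/-- Geometric-mean step: the value at the max index is dominated by spreading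
the exponent over the other indices. -/
lemma gm_step {l : ℕ} (hl : 2 ≤ l) {β : ℝ} (hβ1 : β < 1) (k : Fin l → ℕ)
    (hk : ∀ i, 1 ≤ k i) (i₀ : Fin l) (hmax : ∀ i, k i ≤ k i₀) :
    ∏ i, ((k i : ℝ)) ^ (β - 1) ≤
      ∏ i ∈ Finset.univ.erase i₀, ((k i : ℝ)) ^ ((β - 1) * (l : ℝ) / ((l : ℝ) - 1)) := by
  have hl1 : (1:ℝ) ≤ (l:ℝ) - 1 := by
    have : (2:ℝ) ≤ (l:ℝ) := by exact_mod_cast hl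
    linarith
  have hlne : (l:ℝ) - 1 ≠ 0 := by linarith
  have hkpos : ∀ i, (0:ℝ) < (k i : ℝ) := fun i => by exact_mod_cast hk i
  set c : ℝ := (β - 1) / ((l:ℝ) - 1) with hc_def
  have hcneg : c ≤ 0 := by
    rw [hc_def]
    apply div_nonpos_of_nonpos_of_nonneg <;> linarith
  have hexp : (β - 1) * (l : ℝ) / ((l : ℝ) - 1) = (β - 1) + c := by
    rw [hc_def]; field_simp; ring
  have hcard : (Finset.univ.erase i₀).card = l - 1 := by
    rw [Finset.card_erase_of_mem (Finset.mem_univ i₀), Finset.card_univ, Fintype.card_fin]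
  have hstep : ((k i₀ : ℝ)) ^ (β - 1) ≤ ∏ i ∈ Finset.univ.erase i₀, ((k i : ℝ)) ^ c := by
    have h1 : ∀ i ∈ Finset.univ.erase i₀, ((k i₀ : ℝ)) ^ c ≤ ((k i : ℝ)) ^ c := by
      intro i _
      exact Real.rpow_le_rpow_of_nonpos (hkpos i) (by exact_mod_cast hmax i) hcneg
    calc ((k i₀ : ℝ)) ^ (β - 1)
        = (((k i₀ : ℝ)) ^ c) ^ ((l - 1 : ℕ) : ℝ) := by
          rw [← Real.rpow_mul (hkpos i₀).le]
          congr 1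
          have hl1' : ((l - 1 : ℕ) : ℝ) = (l:ℝ) - 1 := by
            have h1l : 1 ≤ l := by omega
            push_cast [Nat.cast_sub h1l]; ring
          rw [hc_def, hl1']; field_simp
      _ = ∏ _i ∈ Finset.univ.erase i₀, ((k i₀ : ℝ)) ^ c := by
          rw [Finset.prod_const, hcard, Real.rpow_natCast]
      _ ≤ ∏ i ∈ Finset.univ.erase i₀, ((k i : ℝ)) ^ c := by
          refine Finset.prod_le_prod (fun i _ => by positivity) h1
  calc ∏ i, ((k i : ℝ)) ^ (β - 1)
      = ((k i₀ : ℝ)) ^ (β - 1) * ∏ i ∈ Finset.univ.erase i₀, ((k i : ℝ)) ^ (β - 1) :=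
        (Finset.mul_prod_erase _ _ (Finset.mem_univ i₀)).symm
    _ ≤ (∏ i ∈ Finset.univ.erase i₀, ((k i : ℝ)) ^ c) *
          ∏ i ∈ Finset.univ.erase i₀, ((k i : ℝ)) ^ (β - 1) := by
        refine mul_le_mul_of_nonneg_right hstep ?_
        exact Finset.prod_nonneg fun i _ => by positivity
    _ = ∏ i ∈ Finset.univ.erase i₀, ((k i : ℝ)) ^ ((β - 1) + c) := by
        rw [← Finset.prod_mul_distrib]
        refine Finset.prod_congr rfl fun i _ => ?_
        rw [Real.rpow_add (hkpos i)]; ring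
    _ = _ := by
        refine Finset.prod_congr rfl fun i _ => ?_
        rw [hexp]

/-- The constrained-sum estimate. -/
lemma constrained_sum_le {l : ℕ} (hl : 2 ≤ l) {β : ℝ} (hβ1 : β < 1) (N : ℕ) (Z : ℝ) (hZ0 : 0 ≤ Z)
    (hZ : ∀ M : ℕ, ∑ x ∈ Finset.Icc 1 M, ((x:ℝ)) ^ ((β - 1) * (l:ℝ) / ((l:ℝ) - 1)) ≤ Z)
    (e : Fin l → Bool) :
    ∑ k ∈ (Fintype.piFinset fun _ : Fin l => Finset.Icc 1 N).filter
        (fun k => (∑ i, pmInt (e i) * (k i : ℤ)) = 0),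
      ∏ i, ((k i : ℝ)) ^ (β - 1) ≤ (l : ℝ) * Z ^ (l - 1) := by
  classical
  set q : ℝ := (β - 1) * (l:ℝ) / ((l:ℝ) - 1) with hq_def
  set S := (Fintype.piFinset fun _ : Fin l => Finset.Icc 1 N).filter
      (fun k => (∑ i, pmInt (e i) * (k i : ℤ)) = 0) with hS_def
  have hmemS : ∀ k ∈ S, (∀ i, 1 ≤ k i) ∧ (∀ i, k i ≤ N) ∧
      (∑ i, pmInt (e i) * (k i : ℤ)) = 0 := by
    intro k hk
    rw [hS_def, Finset.mem_filter] at hk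
    obtain ⟨hk1, hk2⟩ := hk
    rw [Fintype.mem_piFinset] at hk1
    exact ⟨fun i => (Finset.mem_Icc.1 (hk1 i)).1, fun i => (Finset.mem_Icc.1 (hk1 i)).2, hk2⟩
  have hne : Nonempty (Fin l) := ⟨⟨0, by omega⟩⟩
  set F : (Fin l → ℕ) → ℝ := fun k => ∏ i, ((k i : ℝ)) ^ (β - 1) with hF_def
  have hF0 : ∀ k, 0 ≤ F k := fun k => Finset.prod_nonneg fun i _ => Real.rpow_nonneg (Nat.cast_nonneg _) _
  -- step 1: insert the max index
  have hstep1 : ∑ k ∈ S, F k ≤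
      ∑ i₀ : Fin l, ∑ k ∈ S.filter (fun k => ∀ i, k i ≤ k i₀), F k := by
    have h1 : ∀ k ∈ S, F k ≤ ∑ i₀ : Fin l, if (∀ i, k i ≤ k i₀) then F k else 0 := by
      intro k _
      obtain ⟨i₀, _, hmax⟩ := Finset.exists_max_image Finset.univ k ⟨Classical.arbitrary _, Finset.mem_univ _⟩
      have hterm : F k ≤ if (∀ i, k i ≤ k i₀) then F k else 0 := by
        rw [if_pos (fun i => hmax i (Finset.mem_univ i))]
      calc F k ≤ if (∀ i, k i ≤ k i₀) then F k else 0 := hterm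
        _ ≤ ∑ i₁ : Fin l, if (∀ i, k i ≤ k i₁) then F k else 0 := by
            refine Finset.single_le_sum (f := fun i₁ => if (∀ i, k i ≤ k i₁) then F k else 0)
              (fun i₁ _ => ?_) (Finset.mem_univ i₀)
            split
            · exact hF0 k
            · exact le_refl 0
    calc ∑ k ∈ S, F k ≤ ∑ k ∈ S, ∑ i₀ : Fin l, if (∀ i, k i ≤ k i₀) then F k else 0 :=
          Finset.sum_le_sum h1
      _ = ∑ i₀ : Fin l, ∑ k ∈ S, if (∀ i, k i ≤ k i₀) then F k else 0 := Finset.sum_comm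
      _ = ∑ i₀ : Fin l, ∑ k ∈ S.filter (fun k => ∀ i, k i ≤ k i₀), F k := by
          refine Finset.sum_congr rfl fun i₀ _ => ?_
          exact (Finset.sum_filter _ _).symm
  -- step 2: bound each filtered sum
  have hstep2 : ∀ i₀ : Fin l, ∑ k ∈ S.filter (fun k => ∀ i, k i ≤ k i₀), F k ≤ Z ^ (l - 1) := by
    intro i₀
    set T := S.filter (fun k => ∀ i, k i ≤ k i₀) with hT_def
    set Φ : (Fin l → ℕ) → (Fin l → ℕ) := fun k => Function.update k i₀ 1 with hΦ_def
    set G : (Fin l → ℕ) → ℝ := fun k => ∏ i ∈ Finset.univ.erase i₀, ((k i : ℝ)) ^ q with hG_def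
    have hG0 : ∀ k, 0 ≤ G k := fun k => Finset.prod_nonneg fun i _ => Real.rpow_nonneg (Nat.cast_nonneg _) _
    have hFG : ∀ k ∈ T, F k ≤ G (Φ k) := by
      intro k hk
      rw [hT_def, Finset.mem_filter] at hk
      obtain ⟨hkS, hkmax⟩ := hk
      obtain ⟨hk1, _, _⟩ := hmemS k hkS
      have h1 : G (Φ k) = ∏ i ∈ Finset.univ.erase i₀, ((k i : ℝ)) ^ q := by
        show (∏ i ∈ Finset.univ.erase i₀, ((Function.update k i₀ 1 i : ℕ) : ℝ) ^ q) = _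
        refine Finset.prod_congr rfl fun i hi => ?_
        rw [Function.update_of_ne (Finset.mem_erase.1 hi).1]
      rw [h1]
      exact gm_step hl hβ1 k hk1 i₀ hkmax
    have hinj : Set.InjOn Φ T := by
      intro k hk k' hk' heq
      rw [Finset.mem_coe, hT_def, Finset.mem_filter] at hk hk'
      obtain ⟨_, _, hc⟩ := hmemS k hk.1
      obtain ⟨_, _, hc'⟩ := hmemS k' hk'.1
      have hoff : ∀ i, i ≠ i₀ → k i = k' i := by
        intro i hi
        have h3 : Function.update k i₀ 1 i = Function.update k' i₀ 1 i := congrFun heq i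
        rwa [Function.update_of_ne hi, Function.update_of_ne hi] at h3
      have hsum : ∀ (f : Fin l → ℕ), ∑ i, pmInt (e i) * (f i : ℤ) =
          pmInt (e i₀) * (f i₀ : ℤ) + ∑ i ∈ Finset.univ.erase i₀, pmInt (e i) * (f i : ℤ) :=
        fun f => (Finset.add_sum_erase _ _ (Finset.mem_univ i₀)).symm
      have herase : ∑ i ∈ Finset.univ.erase i₀, pmInt (e i) * (k i : ℤ) =
          ∑ i ∈ Finset.univ.erase i₀, pmInt (e i) * (k' i : ℤ) := by
        refine Finset.sum_congr rfl fun i hi => ?_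
        rw [hoff i (Finset.mem_erase.1 hi).1]
      have h0 : pmInt (e i₀) * (k i₀ : ℤ) = pmInt (e i₀) * (k' i₀ : ℤ) := by
        have h1 := hsum k; rw [hc] at h1
        have h2 := hsum k'; rw [hc'] at h2
        rw [herase] at h1
        linarith [h1, h2]
      have h1 : (k i₀ : ℤ) = (k' i₀ : ℤ) := mul_left_cancel₀ (pmInt_ne_zero (e i₀)) h0
      have h2 : k i₀ = k' i₀ := by exact_mod_cast h1
      funext i
      by_cases hi : i = i₀
      · rw [hi, h2]
      · exact hoff i hi
    -- transfer along Φ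
    have himg : T.image Φ ⊆ Fintype.piFinset
        (fun i : Fin l => if i = i₀ then Finset.Icc 1 1 else Finset.Icc 1 N) := by
      intro k' hk'
      obtain ⟨k, hkT, rfl⟩ := Finset.mem_image.1 hk'
      rw [hT_def, Finset.mem_filter] at hkT
      obtain ⟨hk1, hkN, _⟩ := hmemS k hkT.1
      rw [Fintype.mem_piFinset]
      intro i
      by_cases hi : i = i₀
      · subst hi
        show Function.update k i 1 i ∈ _
        rw [Function.update_self, if_pos rfl]
        simp
      · show Function.update k i₀ 1 i ∈ _
        rw [Function.update_of_ne hi, if_neg hi, Finset.mem_Icc]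
        exact ⟨hk1 i, hkN i⟩
    calc ∑ k ∈ T, F k ≤ ∑ k ∈ T, G (Φ k) := Finset.sum_le_sum hFG
      _ = ∑ k' ∈ T.image Φ, G k' := (Finset.sum_image (fun x hx y hy h => hinj hx hy h)).symm
      _ ≤ ∑ k' ∈ Fintype.piFinset
            (fun i : Fin l => if i = i₀ then Finset.Icc 1 1 else Finset.Icc 1 N), G k' :=
          Finset.sum_le_sum_of_subset_of_nonneg himg (fun k' _ _ => hG0 k')
      _ ≤ Z ^ (l - 1) := by
          have hGsplit : ∀ k' : Fin l → ℕ, G k' = ∏ i,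
              (if i = i₀ then (1:ℝ) else ((k' i : ℝ)) ^ q) := by
            intro k'
            rw [hG_def]
            rw [← Finset.mul_prod_erase _ _ (Finset.mem_univ i₀), if_pos rfl, one_mul]
            exact Finset.prod_congr rfl fun i hi => by rw [if_neg (Finset.mem_erase.1 hi).1]
          have := Finset.prod_univ_sum
            (fun i : Fin l => if i = i₀ then Finset.Icc 1 1 else Finset.Icc 1 N)
            (fun (i : Fin l) (x : ℕ) => if i = i₀ then (1:ℝ) else ((x : ℝ)) ^ q)
          rw [Finset.sum_congr rfl (fun k' _ => hGsplit k'), ← this]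
          have hfac : ∀ i : Fin l,
              (∑ x ∈ (if i = i₀ then Finset.Icc 1 1 else Finset.Icc 1 N),
                (if i = i₀ then (1:ℝ) else ((x : ℝ)) ^ q)) =
              (if i = i₀ then 1 else ∑ x ∈ Finset.Icc 1 N, ((x : ℝ)) ^ q) := by
            intro i
            by_cases hi : i = i₀ <;> simp [hi]
          rw [Finset.prod_congr rfl (fun i _ => hfac i)]
          set W : ℝ := ∑ x ∈ Finset.Icc 1 N, ((x : ℝ)) ^ q with hW_def
          have hW0 : 0 ≤ W :=
            Finset.sum_nonneg fun x _ => Real.rpow_nonneg (Nat.cast_nonneg _) _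
          have hcard' : (Finset.univ.erase i₀).card = l - 1 := by
            rw [Finset.card_erase_of_mem (Finset.mem_univ i₀), Finset.card_univ,
              Fintype.card_fin]
          have hprodW : (∏ i : Fin l, if i = i₀ then (1:ℝ) else W) = W ^ (l - 1) := by
            rw [← Finset.mul_prod_erase _ _ (Finset.mem_univ i₀), if_pos rfl, one_mul,
              Finset.prod_congr rfl (fun i hi => by rw [if_neg (Finset.mem_erase.1 hi).1]),
              Finset.prod_const, hcard']
          rw [hprodW]
          exact pow_le_pow_left₀ hW0 (hZ N) _
  calc ∑ k ∈ S, F k ≤ ∑ i₀ : Fin l, ∑ k ∈ S.filter (fun k => ∀ i, k i ≤ k i₀), F k := hstep1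
    _ ≤ ∑ _i₀ : Fin l, Z ^ (l - 1) := Finset.sum_le_sum fun i₀ _ => hstep2 i₀
    _ = (l : ℝ) * Z ^ (l - 1) := by rw [Finset.sum_const, Finset.card_univ, Fintype.card_fin,
          nsmul_eq_mul]


lemma exists_Z {r : ℝ} (hr : r < -1) :
    ∃ Z : ℝ, 0 ≤ Z ∧ ∀ M : ℕ, ∑ x ∈ Finset.Icc 1 M, ((x:ℝ)) ^ r ≤ Z := by
  have hsum : Summable (fun n : ℕ => ((n:ℝ)) ^ r) := Real.summable_nat_rpow.2 hr
  refine ⟨∑' n : ℕ, ((n:ℝ)) ^ r,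
    tsum_nonneg (fun n => Real.rpow_nonneg (Nat.cast_nonneg _) _), fun M => ?_⟩
  exact Summable.sum_le_tsum _ (fun i _ => Real.rpow_nonneg (Nat.cast_nonneg _) _) hsum

end PtermAux

/-- Uniform bound `|P(w;m,ℓ,y)| ≤ C_ℓ·|w|^ℓ·r₂(m)^ℓ/m^{ℓ/2}`. -/
theorem Pterm_bound :
    ∀ l : ℕ, 2 ≤ l → ∃ C > (0 : ℝ), ∀ w : ℝ, ∀ m : ℕ, 1 ≤ m → ∀ y : ℝ, 1 ≤ y →
      |Pterm w m l y| ≤ C * |w| ^ l * (r2 m : ℝ) ^ l / (m : ℝ) ^ ((l : ℝ) / 2) := by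
  classical
  intro l hl
  have hl2 : (2:ℝ) ≤ (l:ℝ) := by exact_mod_cast hl
  set β : ℝ := 1 / (2 * (l:ℝ)) with hβ_def
  have hβ0 : 0 < β := by rw [hβ_def]; positivity
  have hβ1 : β < 1 := by
    rw [hβ_def]
    rw [div_lt_one (by linarith)]
    linarith
  set q : ℝ := (β - 1) * (l:ℝ) / ((l:ℝ) - 1) with hq_def
  have hβl : β * (l:ℝ) = 1/2 := by
    rw [hβ_def]; field_simp
  have hq : q < -1 := by
    rw [hq_def, div_lt_iff₀ (by linarith : (0:ℝ) < (l:ℝ) - 1)]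
    nlinarith
  obtain ⟨Z, hZ0, hZ⟩ := PtermAux.exists_Z hq
  obtain ⟨CB, hCB1, hCB⟩ := PtermAux.Dfac_le_rpow hβ0
  have hCB0 : (0:ℝ) ≤ CB := by linarith
  have hπ0 : (0:ℝ) < Real.pi := Real.pi_pos
  set C₀ : ℝ := 2^l * l * (CB * Real.pi)^l * Z^(l-1) with hC₀_def
  have hC₀0 : 0 ≤ C₀ := by
    rw [hC₀_def]
    have h1 : (0:ℝ) ≤ CB * Real.pi := by positivity
    positivity
  refine ⟨C₀ + 1, by positivity, ?_⟩
  intro w m hm y hy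
  have hm0 : (0:ℝ) < (m:ℝ) := by exact_mod_cast hm
  have hml : (0:ℝ) < (m:ℝ)^l := by positivity
  set N := ⌊y⌋₊ with hN_def
  set A : ℝ := CB * Real.pi * (r2 m : ℝ) * Real.sqrt m * |w| with hA_def
  have hA0 : 0 ≤ A := by
    rw [hA_def]
    have := Real.sqrt_nonneg (m:ℝ)
    positivity
  -- pointwise bound
  have hterm : ∀ k : ℕ, 1 ≤ k →
      |(r2 (m * k ^ 2) : ℝ) / (k : ℝ) ^ 2 * Real.sin (Real.pi * Real.sqrt m * k * w)|
        ≤ A * ((k:ℝ)) ^ (β - 1) := by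
    intro k hk
    have hk0 : (0:ℝ) < (k:ℝ) := by exact_mod_cast hk
    have hsin : |Real.sin (Real.pi * Real.sqrt m * k * w)| ≤ Real.pi * Real.sqrt m * k * |w| := by
      calc |Real.sin (Real.pi * Real.sqrt m * k * w)| ≤ |Real.pi * Real.sqrt m * k * w| :=
            Real.abs_sin_le_abs
        _ = Real.pi * Real.sqrt m * k * |w| := by
            rw [abs_mul, abs_mul, abs_mul, abs_of_nonneg hπ0.le,
              abs_of_nonneg (Real.sqrt_nonneg _), abs_of_nonneg hk0.le]
    have hr2 : (r2 (m * k ^ 2) : ℝ) ≤ CB * ((k:ℝ)) ^ β * (r2 m : ℝ) := by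
      have h1 : (r2 (m * k ^ 2) : ℝ) ≤ (PtermAux.Dfac k : ℝ) * (r2 m : ℝ) := by
        exact_mod_cast PtermAux.r2_mul_sq_le m k (by omega)
      have h2 : (PtermAux.Dfac k : ℝ) ≤ CB * ((k:ℝ)) ^ β := hCB k (by omega)
      calc (r2 (m * k ^ 2) : ℝ) ≤ (PtermAux.Dfac k : ℝ) * (r2 m : ℝ) := h1
        _ ≤ CB * ((k:ℝ)) ^ β * (r2 m : ℝ) :=
            mul_le_mul_of_nonneg_right h2 (Nat.cast_nonneg _)
    have habs : |(r2 (m * k ^ 2) : ℝ) / (k : ℝ) ^ 2 * Real.sin (Real.pi * Real.sqrt m * k * w)|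
        = (r2 (m * k ^ 2) : ℝ) / (k : ℝ) ^ 2 * |Real.sin (Real.pi * Real.sqrt m * k * w)| := by
      rw [abs_mul, abs_of_nonneg (by positivity : (0:ℝ) ≤ (r2 (m * k ^ 2) : ℝ) / (k : ℝ) ^ 2)]
    rw [habs]
    have hq2 : (r2 (m * k ^ 2) : ℝ) / (k : ℝ) ^ 2 * |Real.sin (Real.pi * Real.sqrt m * k * w)|
        ≤ (CB * ((k:ℝ)) ^ β * (r2 m : ℝ)) / (k : ℝ) ^ 2 * (Real.pi * Real.sqrt m * k * |w|) := by
      apply mul_le_mul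
      · gcongr
      · exact hsin
      · exact abs_nonneg _
      · positivity
    refine hq2.trans (le_of_eq ?_)
    have hrw : ((k:ℝ)) ^ (β - 1) = ((k:ℝ)) ^ β / (k:ℝ) := by
      rw [Real.rpow_sub hk0, Real.rpow_one]
    rw [hA_def, hrw]
    first
    | (field_simp; ring)
    | field_simp
  -- now bound Pterm
  have hmoeb : (((ArithmeticFunction.moebius m : ℤ) : ℝ)) ^ 2 ≤ 1 := by
    have h1 : (ArithmeticFunction.moebius m) ^ 2 = if Squarefree m then 1 else 0 :=
      ArithmeticFunction.moebius_sq
    have h2 : (((ArithmeticFunction.moebius m : ℤ) : ℝ)) ^ 2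
        = (((ArithmeticFunction.moebius m) ^ 2 : ℤ) : ℝ) := by push_cast; ring
    rw [h2, h1]
    split <;> norm_num
  -- the inner sums
  have hinner : ∀ e : Fin l → Bool,
      |∑ k ∈ (Fintype.piFinset fun _ : Fin l => Finset.Icc 1 N).filter
          (fun k => (∑ i, pmInt (e i) * (k i : ℤ)) = 0),
        ∏ i, (r2 (m * k i ^ 2) : ℝ) / (k i : ℝ) ^ 2 *
          Real.sin (Real.pi * Real.sqrt m * k i * w)|
      ≤ A ^ l * ((l:ℝ) * Z ^ (l - 1)) := by
    intro e
    have hstep : ∀ k ∈ (Fintype.piFinset fun _ : Fin l => Finset.Icc 1 N).filter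
        (fun k => (∑ i, pmInt (e i) * (k i : ℤ)) = 0),
        |∏ i, (r2 (m * k i ^ 2) : ℝ) / (k i : ℝ) ^ 2 *
          Real.sin (Real.pi * Real.sqrt m * k i * w)|
        ≤ A ^ l * ∏ i, ((k i : ℝ)) ^ (β - 1) := by
      intro k hk
      rw [Finset.mem_filter, Fintype.mem_piFinset] at hk
      have hk1 : ∀ i, 1 ≤ k i := fun i => (Finset.mem_Icc.1 (hk.1 i)).1
      rw [Finset.abs_prod]
      calc ∏ i, |(r2 (m * k i ^ 2) : ℝ) / (k i : ℝ) ^ 2 *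
              Real.sin (Real.pi * Real.sqrt m * k i * w)|
          ≤ ∏ i, (A * ((k i : ℝ)) ^ (β - 1)) :=
            Finset.prod_le_prod (fun i _ => abs_nonneg _) (fun i _ => hterm (k i) (hk1 i))
        _ = A ^ l * ∏ i, ((k i : ℝ)) ^ (β - 1) := by
            rw [Finset.prod_mul_distrib, Finset.prod_const, Finset.card_univ, Fintype.card_fin]
    calc |∑ k ∈ (Fintype.piFinset fun _ : Fin l => Finset.Icc 1 N).filter
          (fun k => (∑ i, pmInt (e i) * (k i : ℤ)) = 0),
        ∏ i, (r2 (m * k i ^ 2) : ℝ) / (k i : ℝ) ^ 2 *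
          Real.sin (Real.pi * Real.sqrt m * k i * w)|
        ≤ ∑ k ∈ (Fintype.piFinset fun _ : Fin l => Finset.Icc 1 N).filter
          (fun k => (∑ i, pmInt (e i) * (k i : ℤ)) = 0),
          |∏ i, (r2 (m * k i ^ 2) : ℝ) / (k i : ℝ) ^ 2 *
            Real.sin (Real.pi * Real.sqrt m * k i * w)| := Finset.abs_sum_le_sum_abs _ _
      _ ≤ ∑ k ∈ (Fintype.piFinset fun _ : Fin l => Finset.Icc 1 N).filter
          (fun k => (∑ i, pmInt (e i) * (k i : ℤ)) = 0),
          A ^ l * ∏ i, ((k i : ℝ)) ^ (β - 1) := Finset.sum_le_sum hstep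
      _ = A ^ l * ∑ k ∈ (Fintype.piFinset fun _ : Fin l => Finset.Icc 1 N).filter
          (fun k => (∑ i, pmInt (e i) * (k i : ℤ)) = 0),
          ∏ i, ((k i : ℝ)) ^ (β - 1) := by rw [Finset.mul_sum]
      _ ≤ A ^ l * ((l:ℝ) * Z ^ (l - 1)) := by
          apply mul_le_mul_of_nonneg_left _ (by positivity)
          exact PtermAux.constrained_sum_le hl hβ1 N Z hZ0 hZ e
  -- assemble
  have hPterm : |Pterm w m l y| ≤ (1 / (m:ℝ)^l) * (2^l * (A ^ l * ((l:ℝ) * Z ^ (l - 1)))) := by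
    rw [Pterm]
    rw [abs_mul]
    have h1 : |(((ArithmeticFunction.moebius m : ℤ) : ℝ)) ^ 2 / (m : ℝ) ^ l| ≤ 1 / (m:ℝ)^l := by
      rw [abs_div, abs_of_nonneg hml.le, abs_of_nonneg (sq_nonneg _)]
      gcongr
    have h2 : |∑ e : Fin l → Bool, (∏ i, pmOne (e i)) *
        ∑ k ∈ (Fintype.piFinset fun _ : Fin l => Finset.Icc 1 ⌊y⌋₊).filter
            (fun k => (∑ i, pmInt (e i) * (k i : ℤ)) = 0),
          ∏ i, (r2 (m * k i ^ 2) : ℝ) / (k i : ℝ) ^ 2 *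
            Real.sin (Real.pi * Real.sqrt m * k i * w)|
        ≤ 2^l * (A ^ l * ((l:ℝ) * Z ^ (l - 1))) := by
      calc |∑ e : Fin l → Bool, (∏ i, pmOne (e i)) *
          ∑ k ∈ (Fintype.piFinset fun _ : Fin l => Finset.Icc 1 ⌊y⌋₊).filter
              (fun k => (∑ i, pmInt (e i) * (k i : ℤ)) = 0),
            ∏ i, (r2 (m * k i ^ 2) : ℝ) / (k i : ℝ) ^ 2 *
              Real.sin (Real.pi * Real.sqrt m * k i * w)|
          ≤ ∑ e : Fin l → Bool, |(∏ i, pmOne (e i)) *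
            ∑ k ∈ (Fintype.piFinset fun _ : Fin l => Finset.Icc 1 ⌊y⌋₊).filter
                (fun k => (∑ i, pmInt (e i) * (k i : ℤ)) = 0),
              ∏ i, (r2 (m * k i ^ 2) : ℝ) / (k i : ℝ) ^ 2 *
                Real.sin (Real.pi * Real.sqrt m * k i * w)| := Finset.abs_sum_le_sum_abs _ _
        _ ≤ ∑ _e : Fin l → Bool, A ^ l * ((l:ℝ) * Z ^ (l - 1)) := by
            refine Finset.sum_le_sum fun e _ => ?_
            rw [abs_mul]
            have hpm : |∏ i, pmOne (e i)| = 1 := by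
              rw [Finset.abs_prod]
              have : ∀ i : Fin l, |pmOne (e i)| = 1 := by
                intro i; cases (e i) <;> simp [pmOne]
              rw [Finset.prod_congr rfl (fun i _ => this i), Finset.prod_const, one_pow]
            rw [hpm, one_mul]
            exact hinner e
        _ = 2^l * (A ^ l * ((l:ℝ) * Z ^ (l - 1))) := by
            rw [Finset.sum_const, Finset.card_univ, nsmul_eq_mul]
            congr 1
            simp [Fintype.card_fun]
    exact mul_le_mul h1 h2 (abs_nonneg _) (by positivity)
  -- final algebra
  have hsqrt : (Real.sqrt (m:ℝ)) ^ l = (m:ℝ) ^ ((l:ℝ)/2) := by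
    rw [Real.sqrt_eq_rpow, ← Real.rpow_natCast ((m:ℝ) ^ ((1:ℝ)/2)) l, ← Real.rpow_mul hm0.le]
    congr 1
    ring
  have hmlr : (m:ℝ) ^ l = (m:ℝ) ^ ((l:ℝ)) := (Real.rpow_natCast _ l).symm
  have hApow : A ^ l = (CB * Real.pi)^l * (r2 m : ℝ)^l * ((m:ℝ) ^ ((l:ℝ)/2)) * |w|^l := by
    rw [hA_def]
    rw [show CB * Real.pi * (r2 m : ℝ) * Real.sqrt m * |w|
        = (CB * Real.pi) * ((r2 m : ℝ)) * (Real.sqrt m) * |w| by ring]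
    rw [mul_pow, mul_pow, mul_pow, hsqrt]
  have hfinal : (1 / (m:ℝ)^l) * (2^l * (A ^ l * ((l:ℝ) * Z ^ (l - 1))))
      = C₀ * |w|^l * (r2 m : ℝ)^l * ((m:ℝ) ^ ((l:ℝ)/2) / (m:ℝ)^l) := by
    rw [hApow, hC₀_def]
    ring
  have hdivle : (m:ℝ) ^ ((l:ℝ)/2) / (m:ℝ)^l = ((m:ℝ) ^ ((l:ℝ)/2))⁻¹ * ((m:ℝ) ^ ((l:ℝ)/2) * (m:ℝ) ^ ((l:ℝ)/2)) / (m:ℝ)^l := by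
    rw [← mul_assoc, inv_mul_cancel₀ (by positivity), one_mul]
  have hsq : (m:ℝ) ^ ((l:ℝ)/2) * (m:ℝ) ^ ((l:ℝ)/2) = (m:ℝ)^l := by
    rw [← Real.rpow_add hm0, hmlr]
    congr 1
    ring
  have hdiv : (m:ℝ) ^ ((l:ℝ)/2) / (m:ℝ)^l = ((m:ℝ) ^ ((l:ℝ)/2))⁻¹ := by
    rw [hdivle, hsq, mul_div_assoc, div_self hml.ne', mul_one]
  calc |Pterm w m l y| ≤ (1 / (m:ℝ)^l) * (2^l * (A ^ l * ((l:ℝ) * Z ^ (l - 1)))) := hPterm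
    _ = C₀ * |w|^l * (r2 m : ℝ)^l * ((m:ℝ) ^ ((l:ℝ)/2) / (m:ℝ)^l) := hfinal
    _ = C₀ * |w|^l * (r2 m : ℝ)^l / ((m:ℝ) ^ ((l:ℝ)/2)) := by
        rw [hdiv]; ring
    _ ≤ (C₀ + 1) * |w| ^ l * (r2 m : ℝ) ^ l / (m : ℝ) ^ ((l : ℝ) / 2) := by
        apply div_le_div_of_nonneg_right _ (by positivity)
        have : 0 ≤ |w|^l * (r2 m : ℝ)^l := by positivity
        nlinarith
end
end
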